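/- arXiv:1212.0751 — 2 statements merged into one kernel-verified Lean document; each statement's English description precedes it below -/
import Mathlib

section
/- The map sending a pair (T, T') of binary trees of size n with T ≤ T' in the Tamari order to the interval-poset IP[T,T'] (the poset on {1,…,n} whose relations are those of dec(T) together with those of inc(T')) is a bijection from the set of intervals of the Tamari lattice of size n onto the set of interval-posets of size n. In particular, the number of interval-posets of size n equals the number of Tamari intervals of size n. -/
open Polynomial

/-- A binary tree: either the empty tree or a pair of binary trees
(left and right subtrees) grafted on an internal node. -/
inductive BinTree : Type
  | leaf : BinTree
  | node : BinTree → BinTree → BinTree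

namespace BinTree

/-- The size of a binary tree: its number of internal nodes. -/
def size : BinTree → ℕ
  | leaf => 0
  | node l r => l.size + r.size + 1

/-- One right rotation somewhere in the tree: `Rot T T'` means that `T'` is obtained
from `T` by replacing one subtree of the form `y(x(A,B),C)` by `x(A,y(B,C))`. -/
inductive Rot : BinTree → BinTree → Prop
  | root (A B C : BinTree) : Rot (node (node A B) C) (node A (node B C))
  | left {L L' : BinTree} (R : BinTree) : Rot L L' → Rot (node L R) (node L' R)
  | right (L : BinTree) {R R' : BinTree} : Rot R R' → Rot (node L R) (node L R')

/-- The Tamari order: `TamariLE T T'` iff `T'` is obtained from `T` by a (possibly empty)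
sequence of right rotations. -/
def TamariLE (T T' : BinTree) : Prop := Relation.ReflTransGen Rot T T'

/-- The Tamari polynomial `B_T ∈ ℤ[x]`: `B_∅ = 1` and for `T = x(L,R)`, `B_T` is the
unique polynomial with `(x-1)·B_T = x·B_L·(x·B_R - B_R(1))` (exact division by the
monic polynomial `X - 1`, the right-hand side vanishing at `x = 1`). -/
noncomputable def tamPoly : BinTree → Polynomial ℤ
  | leaf => 1
  | node l r =>
      (X * tamPoly l * (X * tamPoly r - C ((tamPoly r).eval 1))) /ₘ (X - C 1)

/-- The mirror Tamari polynomial, obtained by exchanging the roles of the left and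
right subtrees in the recursive definition of the Tamari polynomial. -/
noncomputable def tamPolyMirror : BinTree → Polynomial ℤ
  | leaf => 1
  | node l r =>
      (X * tamPolyMirror r * (X * tamPolyMirror l - C ((tamPolyMirror l).eval 1))) /ₘ (X - C 1)

/-- The number of nodes on the left border of a binary tree. -/
def leftBorder : BinTree → ℕ
  | leaf => 0
  | node l _ => l.leftBorder + 1

/-- The number of nodes on the right border of a binary tree. -/
def rightBorder : BinTree → ℕ
  | leaf => 0
  | node _ r => r.rightBorder + 1

/-- `inSub T a b`: in the unique binary-search-tree labelling of `T` by `1,…,size T`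
(all labels of the left subtree of a node are smaller than its label, all labels of its
right subtree are larger), the node labelled `a` belongs to the subtree rooted at the
node labelled `b` (in particular `inSub T a a` holds for every node label `a`). -/
def inSub : BinTree → ℕ → ℕ → Prop
  | leaf => fun _ _ => False
  | node l r => fun a b =>
      (b = l.size + 1 ∧ 1 ≤ a ∧ a ≤ l.size + r.size + 1) ∨
      inSub l a b ∨
      (l.size + 1 < a ∧ l.size + 1 < b ∧ inSub r (a - (l.size + 1)) (b - (l.size + 1)))

/-- The binary search tree poset of `T`: `bstRel T a b` iff `a ≺_T b`, i.e. `a ≠ b` and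
the node labelled `a` is in the subtree rooted at the node labelled `b`. -/
def bstRel (T : BinTree) (a b : ℕ) : Prop := a ≠ b ∧ inSub T a b

/-- The increasing forest `inc(T)`: `a ≺ b` iff `a < b` and `a ≺_T b`. -/
def incRel (T : BinTree) (a b : ℕ) : Prop := a < b ∧ bstRel T a b

/-- The decreasing forest `dec(T)`: `b ≺ a` iff `b > a` and `b ≺_T a`. -/
def decRel (T : BinTree) (a b : ℕ) : Prop := b < a ∧ bstRel T a b

/-- The relations of the interval-poset `IP[T,T']`: exactly those of `dec(T)`
together with those of `inc(T')`. -/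
def IPrel (T T' : BinTree) (a b : ℕ) : Prop := decRel T a b ∨ incRel T' a b

end BinTree

open BinTree

/-- `σ` is a linear extension of the strict relation `rel` on `{1,…,n}`: reading the word
`σ(1)…σ(n)` (the `i`-th letter being the label `(σ i : ℕ) + 1`), whenever `rel a b` holds
the letter `a` appears before the letter `b`. -/
def IsLinExt (n : ℕ) (rel : ℕ → ℕ → Prop) (σ : Equiv.Perm (Fin n)) : Prop :=
  ∀ i j : Fin n, rel ((σ i : ℕ) + 1) ((σ j : ℕ) + 1) → i < j

/-- An interval-poset of size `n`: a (strict) poset on `{1,…,n}` such that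
`a ≺ c` implies `b ≺ c` for all `a < b < c`, and `c ≺ a` implies `b ≺ a` for all
`a < b < c`. -/
def IsIntervalPoset (n : ℕ) (rel : ℕ → ℕ → Prop) : Prop :=
  (∀ a b, rel a b → 1 ≤ a ∧ a ≤ n ∧ 1 ≤ b ∧ b ≤ n) ∧
  (∀ a, ¬ rel a a) ∧
  (∀ a b c, rel a b → rel b c → rel a c) ∧
  (∀ a b c, a < b → b < c → rel a c → rel b c) ∧
  (∀ a b c, a < b → b < c → rel c a → rel b a)

/-- `trees(P)` : the number of connected components of the forest formed by the decreasing
relations of `P`, i.e. the number of `k ∈ {1,…,n}` such that there is no `j < k`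
with `k ≺_P j`. -/
noncomputable def treeStat (n : ℕ) (rel : ℕ → ℕ → Prop) : ℕ :=
  Set.ncard {k : ℕ | 1 ≤ k ∧ k ≤ n ∧ ∀ j, j < k → ¬ rel k j}

/-- The composition `𝔹(I1,I2)` of two interval-posets of sizes `k1` and `k2`:
the set of interval-posets `I` of size `k1+k2+1` such that
(i) the relations of `I` among `1,…,k1` are exactly those of `I1`,
(ii) the relations of `I` among `k1+2,…,k1+k2+1` are exactly those of `I2` shifted
by `k1+1`, (iii) `i ≺_I k1+1` for all `i ≤ k1`, and (iv) there is no relation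
`k1+1 ≺_I j` for `j > k1+1`. -/
def Comp (k1 k2 : ℕ) (I1 I2 : ℕ → ℕ → Prop) : Set (ℕ → ℕ → Prop) :=
  {I | IsIntervalPoset (k1 + k2 + 1) I ∧
    (∀ a b, 1 ≤ a → a ≤ k1 → 1 ≤ b → b ≤ k1 → (I a b ↔ I1 a b)) ∧
    (∀ a b, k1 + 2 ≤ a → a ≤ k1 + k2 + 1 → k1 + 2 ≤ b → b ≤ k1 + k2 + 1 →
      (I a b ↔ I2 (a - (k1 + 1)) (b - (k1 + 1)))) ∧
    (∀ i, 1 ≤ i → i ≤ k1 → I i (k1 + 1)) ∧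
    (∀ j, k1 + 1 < j → ¬ I (k1 + 1) j)}

/-- The co-inversions of a permutation `σ` of `{1,…,n}` (written as the word
`σ(1)…σ(n)`): pairs `(σ(i), σ(j))` with `i < j` and `σ(i) > σ(j)`. -/
def coinv (n : ℕ) (σ : Equiv.Perm (Fin n)) : Set (Fin n × Fin n) :=
  {p | ∃ i j : Fin n, i < j ∧ σ j < σ i ∧ p = (σ i, σ j)}


/- ===================== Auxiliary development ===================== -/

namespace BinTree

/-- Right end of the label interval of the subtree rooted at label `b`. -/
def hiT : BinTree → ℕ → ℕ
  | leaf, _ => 0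
  | node l r, b =>
      if b ≤ l.size then hiT l b
      else if b = l.size + 1 then l.size + r.size + 1
      else hiT r (b - (l.size + 1)) + (l.size + 1)

/-- Left end of the label interval of the subtree rooted at label `b`. -/
def loT : BinTree → ℕ → ℕ
  | leaf, _ => 0
  | node l r, b =>
      if b ≤ l.size then loT l b
      else if b = l.size + 1 then 1
      else loT r (b - (l.size + 1)) + (l.size + 1)

lemma hiT_bounds : ∀ (T : BinTree) (b : ℕ), 1 ≤ b → b ≤ T.size →
    b ≤ hiT T b ∧ hiT T b ≤ T.size ∧ 1 ≤ loT T b ∧ loT T b ≤ b := by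
  intro T
  induction T with
  | leaf => intro b h1 h2; simp [size] at h2; omega
  | node l r ihl ihr =>
    intro b h1 h2
    simp only [size] at h2
    simp only [hiT, loT, size]
    rcases lt_trichotomy b (l.size + 1) with h | h | h
    · have hb : b ≤ l.size := by omega
      simp only [if_pos hb]
      have := ihl b h1 hb
      omega
    · simp only [h]
      simp only [if_neg (by omega : ¬ l.size + 1 ≤ l.size), if_pos rfl, if_true]
      omega
    · have hb : ¬ b ≤ l.size := by omega
      have hb' : b ≠ l.size + 1 := by omega
      simp only [if_neg hb, if_neg hb']
      have := ihr (b - (l.size + 1)) (by omega) (by omega)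
      omega

/-- Characterization of `inSub` in terms of the interval `[loT, hiT]`. -/
lemma inSub_iff : ∀ (T : BinTree) (a b : ℕ),
    inSub T a b ↔ (1 ≤ b ∧ b ≤ T.size ∧ loT T b ≤ a ∧ a ≤ hiT T b) := by
  intro T
  induction T with
  | leaf => intro a b; simp [inSub, size]; omega
  | node l r ihl ihr =>
    intro a b
    simp only [inSub, size, hiT, loT]
    rcases lt_trichotomy b (l.size + 1) with h | h | h
    · have hb : b ≤ l.size := by omega
      simp only [if_pos hb]
      constructor
      · rintro (⟨h1, _, _⟩ | h1 | ⟨h1, h2, _⟩)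
        · omega
        · have := (ihl a b).mp h1
          omega
        · omega
      · rintro ⟨h1, h2, h3, h4⟩
        exact Or.inr (Or.inl ((ihl a b).mpr ⟨h1, hb, h3, h4⟩))
    · subst h
      simp only [if_neg (by omega : ¬ l.size + 1 ≤ l.size), if_pos rfl, if_true]
      constructor
      · rintro (⟨_, h1, h2⟩ | h1 | ⟨h1, h2, _⟩)
        · omega
        · have := (ihl a (l.size + 1)).mp h1
          omega
        · omega
      · rintro ⟨h1, h2, h3, h4⟩
        exact Or.inl ⟨trivial, by omega, by omega⟩
    · have hb : ¬ b ≤ l.size := by omega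
      have hb' : b ≠ l.size + 1 := by omega
      simp only [if_neg hb, if_neg hb']
      constructor
      · rintro (⟨h1, _, _⟩ | h1 | ⟨h1, h2, h3⟩)
        · omega
        · have := (ihl a b).mp h1
          have := l.size.le_refl
          omega
        · have := (ihr (a - (l.size + 1)) (b - (l.size + 1))).mp h3
          omega
      · rintro ⟨h1, h2, h3, h4⟩
        have hlo := hiT_bounds r (b - (l.size + 1)) (by omega) (by omega)
        refine Or.inr (Or.inr ⟨by omega, by omega, ?_⟩)
        exact (ihr _ _).mpr ⟨by omega, by omega, by omega, by omega⟩

/-- Laminarity: if `c` lies in the subtree rooted at `b`, its subtree interval is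
nested inside that of `b`. -/
lemma nested : ∀ (T : BinTree) (b c : ℕ), 1 ≤ b → b ≤ T.size →
    loT T b ≤ c → c ≤ hiT T b →
    (loT T b ≤ loT T c ∧ hiT T c ≤ hiT T b ∧
      (b < c → b < loT T c) ∧ (c < b → hiT T c < b)) := by
  intro T
  induction T with
  | leaf => intro b c h1 h2; simp [size] at h2; omega
  | node l r ihl ihr =>
    intro b c h1 h2 h3 h4
    simp only [size] at h2
    simp only [hiT, loT] at *
    rcases lt_trichotomy b (l.size + 1) with h | h | h
    · have hb : b ≤ l.size := by omega
      simp only [if_pos hb] at h3 h4 ⊢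
      have hbnd := hiT_bounds l b h1 hb
      have hc : c ≤ l.size := by omega
      simp only [if_pos hc]
      exact ihl b c h1 hb h3 h4
    · subst h
      simp only [if_neg (by omega : ¬ l.size + 1 ≤ l.size), if_pos rfl, if_true] at h3 h4 ⊢
      rcases lt_trichotomy c (l.size + 1) with hc | hc | hc
      · have hc' : c ≤ l.size := by omega
        simp only [if_pos hc']
        have := hiT_bounds l c (by omega) hc'
        omega
      · subst hc
        simp only [if_neg (by omega : ¬ l.size + 1 ≤ l.size), if_pos rfl, if_true]
        omega
      · have hc1 : ¬ c ≤ l.size := by omega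
        have hc2 : c ≠ l.size + 1 := by omega
        simp only [if_neg hc1, if_neg hc2]
        have := hiT_bounds r (c - (l.size + 1)) (by omega) (by omega)
        omega
    · have hb1 : ¬ b ≤ l.size := by omega
      have hb2 : b ≠ l.size + 1 := by omega
      simp only [if_neg hb1, if_neg hb2] at h3 h4 ⊢
      have hbnd := hiT_bounds r (b - (l.size + 1)) (by omega) (by omega)
      have hc1 : ¬ c ≤ l.size := by omega
      have hc2 : c ≠ l.size + 1 := by omega
      simp only [if_neg hc1, if_neg hc2]
      have := ihr (b - (l.size + 1)) (c - (l.size + 1)) (by omega) (by omega)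
        (by omega) (by omega)
      omega

/-- The label just beyond the subtree of `b` has `b` in its (left) subtree. -/
lemma lo_succ_hi : ∀ (T : BinTree) (b : ℕ), 1 ≤ b → b ≤ T.size →
    hiT T b < T.size → loT T (hiT T b + 1) ≤ b := by
  intro T
  induction T with
  | leaf => intro b h1 h2; simp [size] at h2; omega
  | node l r ihl ihr =>
    intro b h1 h2 h3
    simp only [size] at h2 h3
    simp only [hiT, loT] at *
    rcases lt_trichotomy b (l.size + 1) with h | h | h
    · have hb : b ≤ l.size := by omega
      simp only [if_pos hb] at h3 ⊢
      have hbnd := hiT_bounds l b h1 hb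
      rcases lt_or_eq_of_le (hbnd.2.1) with hlt | heq
      · have : hiT l b + 1 ≤ l.size := by omega
        simp only [if_pos this]
        exact ihl b h1 hb hlt
      · rw [heq]
        simp only [if_neg (by omega : ¬ l.size + 1 ≤ l.size), if_pos rfl, if_true]
        omega
    · subst h
      simp only [if_neg (by omega : ¬ l.size + 1 ≤ l.size), if_pos rfl, if_true] at h3 ⊢
      omega
    · have hb1 : ¬ b ≤ l.size := by omega
      have hb2 : b ≠ l.size + 1 := by omega
      simp only [if_neg hb1, if_neg hb2] at h3 ⊢
      have hbnd := hiT_bounds r (b - (l.size + 1)) (by omega) (by omega)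
      have h4 : hiT r (b - (l.size + 1)) < r.size := by omega
      have := ihr (b - (l.size + 1)) (by omega) (by omega) h4
      have hx : ¬ hiT r (b - (l.size + 1)) + (l.size + 1) + 1 ≤ l.size := by omega
      have hx2 : hiT r (b - (l.size + 1)) + (l.size + 1) + 1 ≠ l.size + 1 := by omega
      simp only [if_neg hx, if_neg hx2]
      have : hiT r (b - (l.size + 1)) + (l.size + 1) + 1 - (l.size + 1)
          = hiT r (b - (l.size + 1)) + 1 := by omega
      rw [this]
      omega


lemma hiT_left {l r : BinTree} {b : ℕ} (h : b ≤ l.size) :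
    hiT (node l r) b = hiT l b := by simp [hiT, h]

lemma hiT_root (l r : BinTree) :
    hiT (node l r) (l.size + 1) = l.size + r.size + 1 := by
  simp [hiT]

lemma hiT_right {l r : BinTree} {b : ℕ} (h : l.size + 1 < b) :
    hiT (node l r) b = hiT r (b - (l.size + 1)) + (l.size + 1) := by
  rw [hiT, if_neg (by omega), if_neg (by omega)]

lemma loT_left {l r : BinTree} {b : ℕ} (h : b ≤ l.size) :
    loT (node l r) b = loT l b := by simp [loT, h]

lemma loT_root (l r : BinTree) :
    loT (node l r) (l.size + 1) = 1 := by
  simp [loT]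

lemma loT_right {l r : BinTree} {b : ℕ} (h : l.size + 1 < b) :
    loT (node l r) b = loT r (b - (l.size + 1)) + (l.size + 1) := by
  rw [loT, if_neg (by omega), if_neg (by omega)]

lemma rot_size : ∀ {T T' : BinTree}, Rot T T' → T.size = T'.size := by
  intro T T' h
  induction h with
  | root A B C => simp [size]; omega
  | left R _ ih => simp [size]; omega
  | right L _ ih => simp [size]; omega

lemma rot_hi_lo_le : ∀ {T T' : BinTree}, Rot T T' →
    ∀ b, hiT T b ≤ hiT T' b ∧ loT T b ≤ loT T' b := by
  intro T T' h
  induction h with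
  | root A B C =>
    intro b
    have hsz : (node A B).size = A.size + B.size + 1 := by simp [size]
    rcases Nat.lt_or_ge b (A.size + 1) with h1 | h1
    · -- b ≤ A.size (or b = 0)
      have e1 : hiT (node (node A B) C) b = hiT A b := by
        rw [hiT_left (by omega : b ≤ (node A B).size), hiT_left (by omega : b ≤ A.size)]
      have e2 : hiT (node A (node B C)) b = hiT A b :=
        hiT_left (by omega : b ≤ A.size)
      have e3 : loT (node (node A B) C) b = loT A b := by
        rw [loT_left (by omega : b ≤ (node A B).size), loT_left (by omega : b ≤ A.size)]
      have e4 : loT (node A (node B C)) b = loT A b :=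
        loT_left (by omega : b ≤ A.size)
      rw [e1, e2, e3, e4]
      exact ⟨le_refl _, le_refl _⟩
    rcases Nat.lt_or_ge b (A.size + 2) with h2 | h2
    · -- b = A.size + 1
      have hb : b = A.size + 1 := by omega
      subst hb
      have e1 : hiT (node (node A B) C) (A.size + 1) = A.size + B.size + 1 := by
        rw [hiT_left (by omega : A.size + 1 ≤ (node A B).size), hiT_root]
      have e2 : hiT (node A (node B C)) (A.size + 1) = A.size + (node B C).size + 1 :=
        hiT_root A (node B C)
      have e3 : loT (node (node A B) C) (A.size + 1) = 1 := by
        rw [loT_left (by omega : A.size + 1 ≤ (node A B).size), loT_root]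
      have e4 : loT (node A (node B C)) (A.size + 1) = 1 := loT_root A (node B C)
      rw [e1, e2, e3, e4]
      simp [size]
      omega
    rcases Nat.lt_or_ge b (A.size + B.size + 2) with h3 | h3
    · -- A.size + 1 < b ≤ A.size + B.size + 1
      have e1 : hiT (node (node A B) C) b = hiT B (b - (A.size + 1)) + (A.size + 1) := by
        rw [hiT_left (by omega : b ≤ (node A B).size), hiT_right (by omega : A.size + 1 < b)]
      have e2 : hiT (node A (node B C)) b = hiT B (b - (A.size + 1)) + (A.size + 1) := by
        rw [hiT_right (by omega : A.size + 1 < b),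
          hiT_left (by omega : b - (A.size + 1) ≤ B.size)]
      have e3 : loT (node (node A B) C) b = loT B (b - (A.size + 1)) + (A.size + 1) := by
        rw [loT_left (by omega : b ≤ (node A B).size), loT_right (by omega : A.size + 1 < b)]
      have e4 : loT (node A (node B C)) b = loT B (b - (A.size + 1)) + (A.size + 1) := by
        rw [loT_right (by omega : A.size + 1 < b),
          loT_left (by omega : b - (A.size + 1) ≤ B.size)]
      rw [e1, e2, e3, e4]
      exact ⟨le_refl _, le_refl _⟩
    rcases Nat.lt_or_ge b (A.size + B.size + 3) with h4 | h4
    · -- b = A.size + B.size + 2, the old root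
      have hb : b = (node A B).size + 1 := by omega
      subst hb
      have e1 : hiT (node (node A B) C) ((node A B).size + 1)
          = (node A B).size + C.size + 1 := hiT_root _ _
      have e3 : loT (node (node A B) C) ((node A B).size + 1) = 1 := loT_root _ _
      have e2 : hiT (node A (node B C)) ((node A B).size + 1)
          = hiT (node B C) (B.size + 1) + (A.size + 1) := by
        rw [hiT_right (by omega : A.size + 1 < (node A B).size + 1)]
        rw [show (node A B).size + 1 - (A.size + 1) = B.size + 1 by
          simp [size]; omega]
      have e4 : loT (node A (node B C)) ((node A B).size + 1)
          = loT (node B C) (B.size + 1) + (A.size + 1) := by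
        rw [loT_right (by omega : A.size + 1 < (node A B).size + 1)]
        rw [show (node A B).size + 1 - (A.size + 1) = B.size + 1 by
          simp [size]; omega]
      rw [e1, e2, e3, e4, hiT_root, loT_root]
      simp [size]
      omega
    · -- b > A.size + B.size + 2
      have e1 : hiT (node (node A B) C) b
          = hiT C (b - ((node A B).size + 1)) + ((node A B).size + 1) := by
        rw [hiT_right (by omega : (node A B).size + 1 < b)]
      have e3 : loT (node (node A B) C) b
          = loT C (b - ((node A B).size + 1)) + ((node A B).size + 1) := by
        rw [loT_right (by omega : (node A B).size + 1 < b)]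
      have e2 : hiT (node A (node B C)) b
          = hiT C (b - ((node A B).size + 1)) + ((node A B).size + 1) := by
        rw [hiT_right (by omega : A.size + 1 < b),
          hiT_right (by omega : B.size + 1 < b - (A.size + 1))]
        have : b - (A.size + 1) - (B.size + 1) = b - ((node A B).size + 1) := by omega
        rw [this]
        omega
      have e4 : loT (node A (node B C)) b
          = loT C (b - ((node A B).size + 1)) + ((node A B).size + 1) := by
        rw [loT_right (by omega : A.size + 1 < b),
          loT_right (by omega : B.size + 1 < b - (A.size + 1))]
        have : b - (A.size + 1) - (B.size + 1) = b - ((node A B).size + 1) := by omega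
        rw [this]
        omega
      rw [e1, e2, e3, e4]
      exact ⟨le_refl _, le_refl _⟩
  | left R hrot ih =>
    intro b
    rename_i L L'
    have hsz : L.size = L'.size := rot_size hrot
    rcases lt_trichotomy b (L.size + 1) with h1 | h1 | h1
    · rw [hiT_left (by omega), loT_left (by omega),
        hiT_left (by omega), loT_left (by omega)]
      exact ih b
    · subst h1
      rw [hiT_root, loT_root, show L.size + 1 = L'.size + 1 by omega,
        hiT_root, loT_root]
      omega
    · rw [hiT_right h1, loT_right h1, hiT_right (by omega : L'.size + 1 < b),
        loT_right (by omega : L'.size + 1 < b), hsz]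
      omega
  | right L hrot ih =>
    intro b
    rename_i R R'
    rcases lt_trichotomy b (L.size + 1) with h1 | h1 | h1
    · exact ⟨le_of_eq (by rw [hiT_left (by omega), hiT_left (by omega)]),
        le_of_eq (by rw [loT_left (by omega), loT_left (by omega)])⟩
    · subst h1
      rw [hiT_root, loT_root, hiT_root, loT_root]
      have := rot_size hrot
      omega
    · rw [hiT_right h1, loT_right h1, hiT_right h1, loT_right h1]
      have := ih (b - (L.size + 1))
      omega

lemma tamari_size {T T' : BinTree} (h : TamariLE T T') : T.size = T'.size := by
  induction h with
  | refl => rfl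
  | tail _ hr ih => exact ih.trans (rot_size hr)

lemma tamari_hi_le {T T' : BinTree} (h : TamariLE T T') (b : ℕ) :
    hiT T b ≤ hiT T' b := by
  induction h with
  | refl => exact le_refl _
  | tail _ hr ih => exact ih.trans (rot_hi_lo_le hr b).1

lemma tamari_lo_le {T T' : BinTree} (h : TamariLE T T') (b : ℕ) :
    loT T b ≤ loT T' b := by
  induction h with
  | refl => exact le_refl _
  | tail _ hr ih => exact ih.trans (rot_hi_lo_le hr b).2


lemma size_eq_zero {T : BinTree} (h : T.size = 0) : T = leaf := by
  cases T with
  | leaf => rfl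
  | node l r => simp [size] at h

lemma hi_ext : ∀ (T S : BinTree), T.size = S.size →
    (∀ b, 1 ≤ b → b ≤ T.size → hiT T b = hiT S b) → T = S := by
  intro T
  induction T with
  | leaf =>
    intro S hsz _
    exact (size_eq_zero (by simp [size] at hsz; omega)).symm
  | node l r ihl ihr =>
    intro S hsz hh
    cases S with
    | leaf => simp [size] at hsz
    | node l' r' =>
      simp only [size] at hsz
      have hls : l.size = l'.size := by
        by_contra hne
        rcases Nat.lt_or_ge l.size l'.size with hlt | hge
        · have hb := hh (l.size + 1) (by omega) (by simp only [size]; omega)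
          rw [hiT_root] at hb
          rw [hiT_left (by omega : l.size + 1 ≤ l'.size)] at hb
          have := hiT_bounds l' (l.size + 1) (by omega) (by omega)
          omega
        · have hlt : l'.size < l.size := by omega
          have hb := hh (l'.size + 1) (by omega) (by simp only [size]; omega)
          rw [hiT_left (by omega : l'.size + 1 ≤ l.size)] at hb
          rw [hiT_root] at hb
          have := hiT_bounds l (l'.size + 1) (by omega) (by omega)
          omega
      have hl : l = l' := by
        apply ihl l' hls
        intro b h1 h2
        have hb := hh b h1 (by simp only [size]; omega)
        rwa [hiT_left h2, hiT_left (by omega)] at hb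
      have hr : r = r' := by
        apply ihr r' (by omega)
        intro b h1 h2
        have hb := hh (b + (l.size + 1)) (by omega) (by simp only [size]; omega)
        rw [hiT_right (by omega), hiT_right (by omega : l'.size + 1 < b + (l.size + 1))] at hb
        rw [show b + (l.size + 1) - (l.size + 1) = b by omega] at hb
        rw [show b + (l.size + 1) - (l'.size + 1) = b by omega] at hb
        omega
      rw [hl, hr]

lemma lo_ext : ∀ (T S : BinTree), T.size = S.size →
    (∀ b, 1 ≤ b → b ≤ T.size → loT T b = loT S b) → T = S := by
  intro T
  induction T with
  | leaf =>
    intro S hsz _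
    exact (size_eq_zero (by simp [size] at hsz; omega)).symm
  | node l r ihl ihr =>
    intro S hsz hh
    cases S with
    | leaf => simp [size] at hsz
    | node l' r' =>
      simp only [size] at hsz
      have hls : l.size = l'.size := by
        by_contra hne
        rcases Nat.lt_or_ge l.size l'.size with hlt | hge
        · have hb := hh (l'.size + 1) (by omega) (by simp only [size]; omega)
          rw [loT_root] at hb
          rw [loT_right (by omega : l.size + 1 < l'.size + 1)] at hb
          have := hiT_bounds r (l'.size + 1 - (l.size + 1)) (by omega) (by omega)
          omega
        · have hlt : l'.size < l.size := by omega
          have hb := hh (l.size + 1) (by omega) (by simp only [size]; omega)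
          rw [loT_root] at hb
          rw [loT_right (by omega : l'.size + 1 < l.size + 1)] at hb
          have := hiT_bounds r' (l.size + 1 - (l'.size + 1)) (by omega) (by omega)
          omega
      have hl : l = l' := by
        apply ihl l' hls
        intro b h1 h2
        have hb := hh b h1 (by simp only [size]; omega)
        rwa [loT_left h2, loT_left (by omega)] at hb
      have hr : r = r' := by
        apply ihr r' (by omega)
        intro b h1 h2
        have hb := hh (b + (l.size + 1)) (by omega) (by simp only [size]; omega)
        rw [loT_right (by omega), loT_right (by omega : l'.size + 1 < b + (l.size + 1))] at hb
        rw [show b + (l.size + 1) - (l.size + 1) = b by omega] at hb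
        rw [show b + (l.size + 1) - (l'.size + 1) = b by omega] at hb
        omega
      rw [hl, hr]

lemma hi_realize : ∀ (n : ℕ) (v : ℕ → ℕ),
    (∀ b, 1 ≤ b → b ≤ n → b ≤ v b ∧ v b ≤ n) →
    (∀ b c, 1 ≤ b → b < c → c ≤ v b → v c ≤ v b) →
    ∃ T : BinTree, T.size = n ∧ ∀ b, 1 ≤ b → b ≤ n → hiT T b = v b := by
  intro n
  induction n using Nat.strong_induction_on with
  | _ n ih =>
  intro v hbd hnc
  rcases Nat.eq_zero_or_pos n with h0 | h0
  · exact ⟨leaf, by simp [size, h0], by omega⟩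
  have hex : ∃ b, 1 ≤ b ∧ b ≤ n ∧ v b = n := by
    refine ⟨n, h0, le_refl n, ?_⟩
    have := hbd n h0 (le_refl n)
    omega
  classical
  obtain ⟨m, ⟨hm1, hm2, hm3⟩, hmin'⟩ :
      ∃ m, (1 ≤ m ∧ m ≤ n ∧ v m = n) ∧ ∀ b, b < m → ¬(1 ≤ b ∧ b ≤ n ∧ v b = n) :=
    ⟨Nat.find hex, Nat.find_spec hex, fun b hb => Nat.find_min hex hb⟩
  have hmin : ∀ b, 1 ≤ b → b < m → v b ≠ n := by
    intro b h1 h2 hv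
    exact hmin' b h2 ⟨h1, by omega, hv⟩
  have hsmall : ∀ b, 1 ≤ b → b < m → v b ≤ m - 1 := by
    intro b h1 h2
    by_contra hc
    have h3 : m ≤ v b := by omega
    have := hnc b m h1 h2 h3
    have := hbd b h1 (by omega)
    exact hmin b h1 h2 (by omega)
  obtain ⟨L, hLsz, hLhi⟩ := ih (m - 1) (by omega) v
    (fun b h1 h2 => ⟨(hbd b h1 (by omega)).1, hsmall b h1 (by omega)⟩)
    (fun b c h1 h2 h3 => hnc b c h1 h2 h3)
  obtain ⟨R, hRsz, hRhi⟩ := ih (n - m) (by omega) (fun b' => v (b' + m) - m)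
    (by
      intro b' h1 h2
      show b' ≤ v (b' + m) - m ∧ v (b' + m) - m ≤ n - m
      have := hbd (b' + m) (by omega) (by omega)
      omega)
    (by
      intro b' c' h1 h2 h3
      show v (c' + m) - m ≤ v (b' + m) - m
      have h4 : c' + m ≤ v (b' + m) := by omega
      have h5 := hnc (b' + m) (c' + m) (by omega) (by omega) h4
      omega)
  refine ⟨node L R, by simp [size]; omega, ?_⟩
  intro b h1 h2
  rcases lt_trichotomy b m with hb | hb | hb
  · rw [hiT_left (by omega : b ≤ L.size)]
    exact hLhi b h1 (by omega)
  · subst hb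
    have e : hiT (node L R) b = L.size + R.size + 1 := by
      rw [show b = L.size + 1 by omega]
      exact hiT_root L R
    rw [e]
    omega
  · rw [hiT_right (by omega : L.size + 1 < b)]
    have := hRhi (b - (L.size + 1)) (by omega) (by omega)
    have hvb := hbd b (by omega) h2
    rw [this]
    rw [show b - (L.size + 1) + m = b by omega]
    omega

lemma lo_realize : ∀ (n : ℕ) (v : ℕ → ℕ),
    (∀ b, 1 ≤ b → b ≤ n → 1 ≤ v b ∧ v b ≤ b) →
    (∀ b c, 1 ≤ c → c < b → b ≤ n → v b ≤ c → v b ≤ v c) →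
    ∃ T : BinTree, T.size = n ∧ ∀ b, 1 ≤ b → b ≤ n → loT T b = v b := by
  intro n
  induction n using Nat.strong_induction_on with
  | _ n ih =>
  intro v hbd hnc
  rcases Nat.eq_zero_or_pos n with h0 | h0
  · exact ⟨leaf, by simp [size, h0], by omega⟩
  classical
  have hP1 : v 1 = 1 := by have := hbd 1 (le_refl 1) h0; omega
  obtain ⟨m, hm1, hm2, hm3, hmax⟩ :
      ∃ m, 1 ≤ m ∧ m ≤ n ∧ v m = 1 ∧ ∀ b, m < b → b ≤ n → v b ≠ 1 :=
    ⟨Nat.findGreatest (fun b => v b = 1) n,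
     Nat.le_findGreatest (P := fun b => v b = 1) h0 hP1,
     Nat.findGreatest_le n,
     Nat.findGreatest_spec (P := fun b => v b = 1) h0 hP1,
     fun b h1 h2 => Nat.findGreatest_is_greatest (P := fun b => v b = 1) h1 h2⟩
  have hbig : ∀ b, m < b → b ≤ n → m + 1 ≤ v b := by
    intro b h1 h2
    by_contra hc
    have h3 : v b ≤ m := by omega
    have := hnc b m hm1 h1 h2 h3
    have := hbd b (by omega) h2
    exact hmax b h1 h2 (by omega)
  obtain ⟨L, hLsz, hLlo⟩ := ih (m - 1) (by omega) v
    (fun b h1 h2 => hbd b h1 (by omega))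
    (fun b c h1 h2 h3 h4 => hnc b c h1 h2 (by omega) h4)
  obtain ⟨R, hRsz, hRlo⟩ := ih (n - m) (by omega) (fun b' => v (b' + m) - m)
    (by
      intro b' h1 h2
      show 1 ≤ v (b' + m) - m ∧ v (b' + m) - m ≤ b'
      have := hbd (b' + m) (by omega) (by omega)
      have := hbig (b' + m) (by omega) (by omega)
      omega)
    (by
      intro b' c' h1 h2 h3 h4
      show v (b' + m) - m ≤ v (c' + m) - m
      have hbn : b' + m ≤ n := by omega
      have hb := hbig (b' + m) (by omega) (by omega)
      have h5 : v (b' + m) ≤ c' + m := by omega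
      have h6 := hnc (b' + m) (c' + m) (by omega) (by omega) hbn h5
      omega)
  refine ⟨node L R, by simp [size]; omega, ?_⟩
  intro b h1 h2
  rcases lt_trichotomy b m with hb | hb | hb
  · rw [loT_left (by omega : b ≤ L.size)]
    exact hLlo b h1 (by omega)
  · subst hb
    have e : loT (node L R) b = 1 := by
      rw [show b = L.size + 1 by omega]
      exact loT_root L R
    rw [e]
    omega
  · rw [loT_right (by omega : L.size + 1 < b)]
    have := hRlo (b - (L.size + 1)) (by omega) (by omega)
    have hvb := hbig b (by omega) h2
    rw [this]
    rw [show b - (L.size + 1) + m = b by omega]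
    omega


lemma hiT_noncross (T : BinTree) (b c : ℕ) (h1 : 1 ≤ b) (h2 : b ≤ T.size)
    (h3 : b < c) (h4 : c ≤ hiT T b) : hiT T c ≤ hiT T b := by
  have hb := hiT_bounds T b h1 h2
  exact (nested T b c h1 h2 (by omega) h4).2.1

lemma hi_of_lo_gt (T : BinTree) (b a : ℕ) (h1 : 1 ≤ b) (h2 : b ≤ T.size)
    (h3 : b ≤ a) (h4 : a ≤ T.size)
    (h5 : ∀ c, b < c → c ≤ a → b < loT T c) : a ≤ hiT T b := by
  by_contra hc
  have hb := hiT_bounds T b h1 h2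
  have h6 := lo_succ_hi T b h1 h2 (by omega)
  have := h5 (hiT T b + 1) (by omega) (by omega)
  omega

lemma rot_exists : ∀ (T : BinTree) (x : ℕ), 1 ≤ x → x ≤ T.size → hiT T x < T.size →
    (∀ z, 1 ≤ z → z < x → hiT T z ≠ hiT T x) →
    ∃ T', Rot T T' ∧ hiT T' x = hiT T (hiT T x + 1) ∧
      ∀ b, b ≠ x → hiT T' b = hiT T b := by
  intro T
  induction T with
  | leaf => intro x h1 h2; simp [size] at h2; omega
  | node l r ihl ihr =>
    intro x h1 h2 h3 h4
    simp only [size] at h2 h3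
    rcases lt_trichotomy x (l.size + 1) with hx | hx | hx
    · -- x in the left subtree
      have hxl : x ≤ l.size := by omega
      have hTx : hiT (node l r) x = hiT l x := hiT_left hxl
      have hlb := hiT_bounds l x h1 hxl
      rcases lt_or_eq_of_le hlb.2.1 with hlt | heq
      · -- rotation inside l
        obtain ⟨l', hrot, hx', hoth⟩ := ihl x h1 hxl hlt (by
          intro z hz1 hz2
          have := h4 z hz1 (by omega)
          rwa [hiT_left (by omega : z ≤ l.size), hiT_left hxl] at this)
        have hls : l.size = l'.size := rot_size hrot
        refine ⟨node l' r, Rot.left r hrot, ?_, ?_⟩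
        · rw [hiT_left (by omega : x ≤ l'.size), hTx,
            hiT_left (by omega : hiT l x + 1 ≤ l.size), hx']
        · intro b hb
          rcases lt_trichotomy b (l.size + 1) with hbc | hbc | hbc
          · rw [hiT_left (by omega : b ≤ l'.size), hiT_left (by omega : b ≤ l.size)]
            exact hoth b hb
          · subst hbc
            have e1 : hiT (node l' r) (l.size + 1) = l'.size + r.size + 1 := by
              rw [show l.size + 1 = l'.size + 1 by omega]
              exact hiT_root l' r
            rw [e1, hiT_root]
            omega
          · rw [hiT_right (by omega : l'.size + 1 < b), hiT_right (by omega : l.size + 1 < b)]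
            rw [← hls]
      · -- rotation at the root
        cases l with
        | leaf => simp [size] at hxl; omega
        | node A B =>
          have hsAB : (node A B).size = A.size + B.size + 1 := by simp [size]
          have hxa : x = A.size + 1 := by
            rcases lt_trichotomy x (A.size + 1) with hc | hc | hc
            · exfalso
              have hba := hiT_bounds A x h1 (by omega)
              rw [hiT_left (by omega : x ≤ A.size)] at heq
              omega
            · exact hc
            · exfalso
              refine h4 (A.size + 1) (by omega) (by omega) ?_
              rw [hiT_left (by omega : A.size + 1 ≤ (node A B).size), hiT_root,
                hiT_left hxl, heq]
              omega
          subst hxa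
          refine ⟨node A (node B r), Rot.root A B r, ?_, ?_⟩
          · rw [hiT_root A (node B r), hTx, heq, hiT_root (node A B) r]
            simp [size]
            omega
          · intro b hb
            rcases lt_trichotomy b (A.size + 1) with hbc | hbc | hbc
            · have e1 : hiT (node A (node B r)) b = hiT A b := hiT_left (by omega)
              have e2 : hiT (node (node A B) r) b = hiT A b := by
                rw [hiT_left (show b ≤ (node A B).size by omega),
                  hiT_left (show b ≤ A.size by omega)]
              rw [e1, e2]
            · omega
            · rcases lt_trichotomy b ((node A B).size + 1) with hbk | hbk | hbk
              · have e2 : hiT (node (node A B) r) b = hiT B (b - (A.size + 1)) + (A.size + 1) := by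
                  rw [hiT_left (show b ≤ (node A B).size by omega), hiT_right hbc]
                have e1 : hiT (node A (node B r)) b = hiT B (b - (A.size + 1)) + (A.size + 1) := by
                  rw [hiT_right hbc,
                    hiT_left (show b - (A.size + 1) ≤ B.size by omega)]
                rw [e1, e2]
              · subst hbk
                have e2 : hiT (node (node A B) r) ((node A B).size + 1)
                    = (node A B).size + r.size + 1 := hiT_root _ _
                have e1 : hiT (node A (node B r)) ((node A B).size + 1)
                    = B.size + r.size + 1 + (A.size + 1) := by
                  rw [hiT_right (show A.size + 1 < (node A B).size + 1 by omega),
                    show (node A B).size + 1 - (A.size + 1) = B.size + 1 by omega]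
                  rw [hiT_root B r]
                rw [e1, e2]
                omega
              · have e2 : hiT (node (node A B) r) b
                    = hiT r (b - ((node A B).size + 1)) + ((node A B).size + 1) :=
                  hiT_right (by omega)
                have e1 : hiT (node A (node B r)) b
                    = hiT r (b - ((node A B).size + 1)) + (B.size + 1) + (A.size + 1) := by
                  rw [hiT_right (show A.size + 1 < b by omega),
                    hiT_right (show B.size + 1 < b - (A.size + 1) by omega),
                    show b - (A.size + 1) - (B.size + 1) = b - ((node A B).size + 1) by omega]
                rw [e1, e2]
                omega
    · -- x is the root: impossible
      exfalso
      rw [show x = l.size + 1 from hx, hiT_root] at h3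
      omega
    · -- x in the right subtree
      have hTx : hiT (node l r) x = hiT r (x - (l.size + 1)) + (l.size + 1) :=
        hiT_right hx
      have hrb := hiT_bounds r (x - (l.size + 1)) (by omega) (by omega)
      obtain ⟨r', hrot, hx', hoth⟩ := ihr (x - (l.size + 1)) (by omega) (by omega)
        (by omega)
        (by
          intro z hz1 hz2 hz3
          refine h4 (z + (l.size + 1)) (by omega) (by omega) ?_
          rw [hiT_right (by omega : l.size + 1 < z + (l.size + 1)), hTx,
            show z + (l.size + 1) - (l.size + 1) = z by omega, hz3])
      have hrs : r.size = r'.size := rot_size hrot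
      refine ⟨node l r', Rot.right l hrot, ?_, ?_⟩
      · rw [hiT_right (by omega : l.size + 1 < x), hx', hTx,
          hiT_right (by omega : l.size + 1 < hiT r (x - (l.size + 1)) + (l.size + 1) + 1),
          show hiT r (x - (l.size + 1)) + (l.size + 1) + 1 - (l.size + 1)
            = hiT r (x - (l.size + 1)) + 1 by omega]
      · intro b hb
        rcases lt_trichotomy b (l.size + 1) with hbc | hbc | hbc
        · rw [hiT_left (by omega : b ≤ l.size), hiT_left (by omega : b ≤ l.size)]
        · subst hbc
          rw [hiT_root, hiT_root, ← hrs]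
        · rw [hiT_right hbc, hiT_right hbc]
          rw [hoth (b - (l.size + 1)) (by omega)]

lemma tamari_of_hi_le_aux : ∀ (D : ℕ) (T T' : BinTree), T.size = T'.size →
    (∀ b, 1 ≤ b → b ≤ T.size → hiT T b ≤ hiT T' b) →
    (∑ b ∈ Finset.Icc 1 T.size, (hiT T' b - hiT T b)) ≤ D →
    TamariLE T T' := by
  intro D
  induction D using Nat.strong_induction_on with
  | _ D ih =>
  intro T T' hsz hle hsum
  by_cases hall : ∀ b, 1 ≤ b → b ≤ T.size → hiT T b = hiT T' b
  · have hTT : T = T' := hi_ext T T' hsz hall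
    rw [hTT]
    exact Relation.ReflTransGen.refl
  push_neg at hall
  obtain ⟨x0, hx01, hx02, hx03⟩ := hall
  classical
  set S : Finset ℕ := (Finset.Icc 1 T.size).filter (fun b => hiT T b < hiT T' b)
    with hSdef
  have hmemS : ∀ b, b ∈ S ↔ (1 ≤ b ∧ b ≤ T.size ∧ hiT T b < hiT T' b) := by
    intro b
    simp [hSdef, Finset.mem_filter, Finset.mem_Icc]
    tauto
  have hS0 : x0 ∈ S := (hmemS x0).mpr ⟨hx01, hx02, lt_of_le_of_ne (hle x0 hx01 hx02) hx03⟩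
  have hSne : S.Nonempty := ⟨x0, hS0⟩
  set M : ℕ := (S.image (hiT T)).max' (hSne.image _) with hMdef
  obtain ⟨xM, hxM, hxMeq⟩ := Finset.mem_image.mp (Finset.max'_mem (S.image (hiT T)) (hSne.image _))
  have hMmax : ∀ b ∈ S, hiT T b ≤ M :=
    fun b hb => Finset.le_max' _ _ (Finset.mem_image_of_mem _ hb)
  set S2 : Finset ℕ := S.filter (fun b => hiT T b = M) with hS2def
  have hS2ne : S2.Nonempty := ⟨xM, Finset.mem_filter.mpr ⟨hxM, hxMeq⟩⟩
  set x : ℕ := S2.min' hS2ne with hxdef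
  have hxS2 : x ∈ S2 := Finset.min'_mem _ _
  have hxS : x ∈ S := (Finset.mem_filter.mp hxS2).1
  have hxM' : hiT T x = M := (Finset.mem_filter.mp hxS2).2
  have hxmin : ∀ b ∈ S, hiT T b = M → x ≤ b :=
    fun b hb hbm => Finset.min'_le S2 b (Finset.mem_filter.mpr ⟨hb, hbm⟩)
  obtain ⟨hx1, hx2, hx3⟩ := (hmemS x).mp hxS
  have hbndx := hiT_bounds T x hx1 hx2
  have hbndx' := hiT_bounds T' x (by omega) (by omega)
  -- the candidate x is a left child: minimality of x among nodes with hi-value M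
  have hminimal : ∀ z, 1 ≤ z → z < x → hiT T z ≠ hiT T x := by
    intro z hz1 hz2 hzeq
    have hz3 : z ≤ T.size := by omega
    have hzS : z ∈ S := by
      refine (hmemS z).mpr ⟨hz1, hz3, ?_⟩
      rcases lt_or_eq_of_le (hle z hz1 hz3) with h | h
      · exact h
      · exfalso
        have hzx : z < x := hz2
        have h5 : x ≤ hiT T' z := by omega
        have h6 := hiT_noncross T' z x (by omega) (by omega) hzx h5
        omega
    have := hxmin z hzS (by omega)
    omega
  have hxlt : hiT T x < T.size := by omega
  obtain ⟨T1, hrot, hx', hoth⟩ := rot_exists T x hx1 hx2 hxlt hminimal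
  set y : ℕ := hiT T x + 1 with hydef
  have hy1 : 1 ≤ y := by omega
  have hy2 : y ≤ T.size := by omega
  have hbndy := hiT_bounds T y hy1 hy2
  have hyeq : hiT T y = hiT T' y := by
    by_contra hne
    have hyS : y ∈ S := (hmemS y).mpr ⟨hy1, hy2, lt_of_le_of_ne (hle y hy1 hy2) hne⟩
    have := hMmax y hyS
    omega
  have hy3 : hiT T' y ≤ hiT T' x := by
    apply hiT_noncross T' x y (by omega) (by omega) (by omega)
    omega
  have hT1size : T1.size = T.size := (rot_size hrot).symm
  have hle1 : ∀ b, 1 ≤ b → b ≤ T1.size → hiT T1 b ≤ hiT T' b := by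
    intro b h1 h2
    by_cases hbx : b = x
    · subst hbx
      rw [hx']
      omega
    · rw [hoth b hbx]
      exact hle b h1 (by omega)
  have hlt1 : (∑ b ∈ Finset.Icc 1 T.size, (hiT T' b - hiT T1 b))
      < (∑ b ∈ Finset.Icc 1 T.size, (hiT T' b - hiT T b)) := by
    apply Finset.sum_lt_sum
    · intro i hi
      by_cases hix : i = x
      · subst hix
        rw [hx']
        omega
      · rw [hoth i hix]
    · refine ⟨x, Finset.mem_Icc.mpr ⟨hx1, hx2⟩, ?_⟩
      rw [hx']
      omega
  have hrec : TamariLE T1 T' := by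
    apply ih (∑ b ∈ Finset.Icc 1 T.size, (hiT T' b - hiT T1 b)) (by omega)
      T1 T' (by omega)
    · exact hle1
    · rw [hT1size]
  exact Relation.ReflTransGen.head hrot hrec

lemma tamari_of_hi_le (T T' : BinTree) (hsz : T.size = T'.size)
    (hle : ∀ b, 1 ≤ b → b ≤ T.size → hiT T b ≤ hiT T' b) : TamariLE T T' :=
  tamari_of_hi_le_aux _ T T' hsz hle (le_refl _)
end BinTree


lemma decRel_iff (T : BinTree) (a b : ℕ) :
    decRel T a b ↔ (1 ≤ b ∧ b ≤ T.size ∧ b < a ∧ a ≤ hiT T b) := by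
  unfold decRel bstRel
  rw [inSub_iff]
  constructor
  · rintro ⟨h1, h2, h3, h4, h5, h6⟩
    exact ⟨h3, h4, h1, h6⟩
  · rintro ⟨h1, h2, h3, h4⟩
    have := hiT_bounds T b h1 h2
    exact ⟨h3, by omega, h1, h2, by omega, h4⟩

lemma incRel_iff (T : BinTree) (a b : ℕ) :
    incRel T a b ↔ (1 ≤ b ∧ b ≤ T.size ∧ a < b ∧ loT T b ≤ a) := by
  unfold incRel bstRel
  rw [inSub_iff]
  constructor
  · rintro ⟨h1, h2, h3, h4, h5, h6⟩
    exact ⟨h3, h4, h1, h5⟩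
  · rintro ⟨h1, h2, h3, h4⟩
    have := hiT_bounds T b h1 h2
    exact ⟨h3, by omega, h1, h2, h4, by omega⟩

lemma IP_is_intervalPoset (n : ℕ) (T T' : BinTree) (hT : T.size = n) (hT' : T'.size = n)
    (htam : TamariLE T T') : IsIntervalPoset n (IPrel T T') := by
  refine ⟨?_, ?_, ?_, ?_, ?_⟩
  · rintro a b (h | h)
    · rw [decRel_iff] at h
      obtain ⟨h1, h2, h3, h4⟩ := h
      have := hiT_bounds T b h1 h2
      omega
    · rw [incRel_iff] at h
      obtain ⟨h1, h2, h3, h4⟩ := h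
      have := hiT_bounds T' b h1 h2
      omega
  · rintro a (⟨h, _⟩ | ⟨h, _⟩) <;> omega
  · rintro a b c (hab | hab) (hbc | hbc)
    · -- dec ; dec
      rw [decRel_iff] at hab hbc
      obtain ⟨h1, h2, h3, h4⟩ := hab
      obtain ⟨h5, h6, h7, h8⟩ := hbc
      left
      rw [decRel_iff]
      have h9 := hiT_noncross T c b h5 h6 h7 h8
      exact ⟨h5, h6, by omega, by omega⟩
    · -- dec ; inc
      rw [decRel_iff] at hab
      rw [incRel_iff] at hbc
      obtain ⟨h1, h2, h3, h4⟩ := hab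
      obtain ⟨h5, h6, h7, h8⟩ := hbc
      rcases lt_trichotomy a c with hac | hac | hac
      · right
        rw [incRel_iff]
        exact ⟨h5, h6, hac, by omega⟩
      · exfalso
        subst hac
        have hlo : loT T a ≤ loT T' a := tamari_lo_le htam a
        have hbnd := hiT_bounds T a (by omega) (by omega)
        have hn := nested T a b (by omega) (by omega) (by omega) (by omega)
        omega
      · left
        rw [decRel_iff]
        have hlo : loT T c ≤ loT T' c := tamari_lo_le htam c
        have hbnd := hiT_bounds T c (by omega) (by omega)
        have hn := nested T c b (by omega) (by omega) (by omega) (by omega)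
        exact ⟨by omega, by omega, hac, by omega⟩
    · -- inc ; dec
      rw [incRel_iff] at hab
      rw [decRel_iff] at hbc
      obtain ⟨h1, h2, h3, h4⟩ := hab
      obtain ⟨h5, h6, h7, h8⟩ := hbc
      rcases lt_trichotomy a c with hac | hac | hac
      · right
        rw [incRel_iff]
        have hhi : hiT T c ≤ hiT T' c := tamari_hi_le htam c
        have hbnd := hiT_bounds T' c (by omega) (by omega)
        have hn := nested T' c b (by omega) (by omega) (by omega) (by omega)
        have hn2 := nested T' b a (by omega) (by omega) (by omega) ?_
        · exact ⟨by omega, by omega, hac, by omega⟩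
        · have hbnd2 := hiT_bounds T' b h1 h2
          omega
      · exfalso
        subst hac
        have hhi : hiT T a ≤ hiT T' a := tamari_hi_le htam a
        have hbnd := hiT_bounds T' a (by omega) (by omega)
        have hn := nested T' a b (by omega) (by omega) (by omega) (by omega)
        omega
      · left
        rw [decRel_iff]
        exact ⟨h5, h6, hac, by omega⟩
    · -- inc ; inc
      rw [incRel_iff] at hab hbc
      obtain ⟨h1, h2, h3, h4⟩ := hab
      obtain ⟨h5, h6, h7, h8⟩ := hbc
      right
      rw [incRel_iff]
      have hbnd := hiT_bounds T' c h5 h6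
      have hn := nested T' c b h5 h6 h8 (by omega)
      exact ⟨h5, h6, by omega, by omega⟩
  · rintro a b c h1 h2 (h | h)
    · rw [decRel_iff] at h
      omega
    · right
      rw [incRel_iff] at h ⊢
      exact ⟨h.1, h.2.1, h2, by omega⟩
  · rintro a b c h1 h2 (h | h)
    · left
      rw [decRel_iff] at h ⊢
      exact ⟨h.1, h.2.1, h1, by omega⟩
    · rw [incRel_iff] at h
      omega

lemma intervalPoset_realize (n : ℕ) (P : ℕ → ℕ → Prop) (hP : IsIntervalPoset n P) :
    ∃ T T' : BinTree, T.size = n ∧ T'.size = n ∧ TamariLE T T' ∧ IPrel T T' = P := by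
  obtain ⟨hbd, hirr, htrans, hint1, hint2⟩ := hP
  classical
  set H : ℕ → ℕ := fun b => sSup {a | a = b ∨ (b < a ∧ P a b)} with hHdef
  set L : ℕ → ℕ := fun b => sInf {a | a = b ∨ (a < b ∧ P a b)} with hLdef
  have hHbdd : ∀ b, b ≤ n → BddAbove {a | a = b ∨ (b < a ∧ P a b)} := by
    intro b hb
    refine ⟨n, ?_⟩
    rintro a (rfl | ⟨_, h⟩)
    · exact hb
    · exact (hbd a b h).2.1
  have hHne : ∀ b, {a | a = b ∨ (b < a ∧ P a b)}.Nonempty := fun b => ⟨b, Or.inl rfl⟩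
  have hHge : ∀ b, b ≤ n → b ≤ H b := fun b hb => le_csSup (hHbdd b hb) (Or.inl rfl)
  have hHle : ∀ b, b ≤ n → H b ≤ n := by
    intro b hb
    refine csSup_le (hHne b) ?_
    rintro a (rfl | ⟨_, h⟩)
    · exact hb
    · exact (hbd a b h).2.1
  have hHmem : ∀ b, b ≤ n → H b = b ∨ (b < H b ∧ P (H b) b) := fun b hb =>
    Nat.sSup_mem (hHne b) (hHbdd b hb)
  have hHkey : ∀ a b, b ≤ n → b < a → (P a b ↔ a ≤ H b) := by
    intro a b hbn hba
    constructor
    · intro h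
      exact le_csSup (hHbdd b hbn) (Or.inr ⟨hba, h⟩)
    · intro h
      rcases hHmem b hbn with hm | ⟨hm1, hm2⟩
      · omega
      · rcases lt_or_eq_of_le h with hlt | heq
        · exact hint2 b a (H b) hba hlt hm2
        · rwa [heq]
  have hHout : ∀ b, n < b → H b = b := by
    intro b hb
    have : {a | a = b ∨ (b < a ∧ P a b)} = {b} := by
      ext a
      simp only [Set.mem_setOf_eq, Set.mem_singleton_iff]
      constructor
      · rintro (rfl | ⟨_, h⟩)
        · rfl
        · have := hbd a b h
          omega
      · intro h; exact Or.inl h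
    rw [hHdef]
    simp only [this]
    exact csSup_singleton b
  have hLne : ∀ b, {a | a = b ∨ (a < b ∧ P a b)}.Nonempty := fun b => ⟨b, Or.inl rfl⟩
  have hLle : ∀ b, L b ≤ b := fun b => Nat.sInf_le (Or.inl rfl)
  have hLge : ∀ b, 1 ≤ b → b ≤ n → 1 ≤ L b := by
    intro b h1 h2
    refine le_csInf (hLne b) ?_
    rintro a (rfl | ⟨_, h⟩)
    · exact h1
    · exact (hbd a b h).1
  have hLmem : ∀ b, L b = b ∨ (L b < b ∧ P (L b) b) := fun b =>
    Nat.sInf_mem (hLne b)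
  have hLkey : ∀ a b, a < b → (P a b ↔ L b ≤ a) := by
    intro a b hab
    constructor
    · intro h
      exact Nat.sInf_le (Or.inr ⟨hab, h⟩)
    · intro h
      rcases hLmem b with hm | ⟨hm1, hm2⟩
      · omega
      · rcases lt_or_eq_of_le h with hlt | heq
        · exact hint1 (L b) a b hlt hab hm2
        · rwa [← heq]
  -- construct the trees
  obtain ⟨T, hTsz, hThi⟩ := hi_realize n H
    (fun b h1 h2 => ⟨hHge b h2, hHle b h2⟩)
    (by
      intro b c h1 h2 h3
      rcases le_or_gt b n with hbn | hbn
      · have hcn : c ≤ n := le_trans h3 (hHle b hbn)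
        have hPcb : P c b := (hHkey c b hbn h2).mpr h3
        rcases hHmem c hcn with hm | ⟨hm1, hm2⟩
        · omega
        · have : P (H c) b := htrans (H c) c b hm2 hPcb
          exact (hHkey (H c) b hbn (by omega)).mp this
      · rw [hHout b hbn] at h3
        omega)
  obtain ⟨T', hT'sz, hT'lo⟩ := lo_realize n L
    (fun b h1 h2 => ⟨hLge b h1 h2, hLle b⟩)
    (by
      intro b c h1 h2 h3 h4
      refine le_csInf (hLne c) ?_
      rintro x (rfl | ⟨hx1, hx2⟩)
      · exact h4
      · have hPcb : P c b := (hLkey c b h2).mpr h4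
        have : P x b := htrans x c b hx2 hPcb
        exact (hLkey x b (by omega)).mp this)
  -- Tamari comparison
  have htam : TamariLE T T' := by
    apply tamari_of_hi_le T T' (by omega)
    intro b h1 h2
    rw [hTsz] at h2
    rw [hThi b h1 h2]
    have hHbn := hHle b h2
    apply hi_of_lo_gt T' b (H b) h1 (by omega) (hHge b h2) (by omega)
    intro c hc1 hc2
    rw [hT'lo c (by omega) (by omega)]
    by_contra hcon
    push_neg at hcon
    have hPcb : P c b := (hHkey c b h2 hc1).mpr hc2
    have hLc : L c ≤ b := hcon
    have hPbc : P b c := (hLkey b c hc1).mpr hLc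
    exact hirr c (htrans c b c hPcb hPbc)
  refine ⟨T, T', hTsz, hT'sz, htam, ?_⟩
  funext a b
  apply propext
  unfold IPrel
  constructor
  · rintro (h | h)
    · rw [decRel_iff] at h
      obtain ⟨h1, h2, h3, h4⟩ := h
      rw [hThi b h1 (by omega)] at h4
      exact (hHkey a b (by omega) h3).mpr h4
    · rw [incRel_iff] at h
      obtain ⟨h1, h2, h3, h4⟩ := h
      rw [hT'lo b h1 (by omega)] at h4
      exact (hLkey a b h3).mpr h4
  · intro h
    have hb := hbd a b h
    rcases lt_trichotomy a b with hab | hab | hab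
    · right
      rw [incRel_iff]
      rw [hT'sz, hT'lo b (by omega) (by omega)]
      exact ⟨by omega, by omega, hab, (hLkey a b hab).mp h⟩
    · exfalso
      subst hab
      exact hirr a h
    · left
      rw [decRel_iff]
      rw [hTsz, hThi b (by omega) (by omega)]
      exact ⟨by omega, by omega, hab, (hHkey a b (by omega) hab).mp h⟩

lemma IP_inj (n : ℕ) (T1 T1' T2 T2' : BinTree) (h1 : T1.size = n) (h1' : T1'.size = n)
    (h2 : T2.size = n) (h2' : T2'.size = n) (heq : IPrel T1 T1' = IPrel T2 T2') :
    T1 = T2 ∧ T1' = T2' := by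
  have hiff : ∀ a b, IPrel T1 T1' a b ↔ IPrel T2 T2' a b := by
    intro a b
    rw [heq]
  have hdec : ∀ a b, b < a → (decRel T1 a b ↔ decRel T2 a b) := by
    intro a b hba
    have := hiff a b
    unfold IPrel at this
    rw [incRel_iff T1', incRel_iff T2'] at this
    constructor
    · intro h
      rcases this.mp (Or.inl h) with h' | h'
      · exact h'
      · omega
    · intro h
      rcases this.mpr (Or.inl h) with h' | h'
      · exact h'
      · omega
  have hinc : ∀ a b, a < b → (incRel T1' a b ↔ incRel T2' a b) := by
    intro a b hab
    have := hiff a b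
    unfold IPrel at this
    rw [decRel_iff T1, decRel_iff T2] at this
    constructor
    · intro h
      rcases this.mp (Or.inr h) with h' | h'
      · omega
      · exact h'
    · intro h
      rcases this.mpr (Or.inr h) with h' | h'
      · omega
      · exact h'
  constructor
  · apply hi_ext T1 T2 (by omega)
    intro b hb1 hb2
    have hbnd1 := hiT_bounds T1 b hb1 hb2
    have hbnd2 := hiT_bounds T2 b hb1 (by omega)
    by_contra hne
    rcases Nat.lt_or_ge (hiT T1 b) (hiT T2 b) with hlt | hge
    · have hd : decRel T2 (hiT T2 b) b := by
        rw [decRel_iff]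
        exact ⟨hb1, by omega, by omega, le_refl _⟩
      have := (hdec (hiT T2 b) b (by omega)).mpr hd
      rw [decRel_iff] at this
      omega
    · have hlt : hiT T2 b < hiT T1 b := by omega
      have hd : decRel T1 (hiT T1 b) b := by
        rw [decRel_iff]
        exact ⟨hb1, hb2, by omega, le_refl _⟩
      have := (hdec (hiT T1 b) b (by omega)).mp hd
      rw [decRel_iff] at this
      omega
  · apply lo_ext T1' T2' (by omega)
    intro b hb1 hb2
    have hbnd1 := hiT_bounds T1' b hb1 hb2
    have hbnd2 := hiT_bounds T2' b hb1 (by omega)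
    by_contra hne
    rcases Nat.lt_or_ge (loT T1' b) (loT T2' b) with hlt | hge
    · have hd : incRel T1' (loT T1' b) b := by
        rw [incRel_iff]
        exact ⟨hb1, hb2, by omega, le_refl _⟩
      have := (hinc (loT T1' b) b (by omega)).mp hd
      rw [incRel_iff] at this
      omega
    · have hlt : loT T2' b < loT T1' b := by omega
      have hd : incRel T2' (loT T2' b) b := by
        rw [incRel_iff]
        exact ⟨hb1, by omega, by omega, le_refl _⟩
      have := (hinc (loT T2' b) b (by omega)).mpr hd
      rw [incRel_iff] at this
      omega

/-- The map sending a pair `(T,T')` of binary trees of size `n` with `T ≤ T'`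
in the Tamari order to the interval-poset `IP[T,T']` is a bijection from the set of
intervals of the Tamari lattice of size `n` onto the set of interval-posets of size `n`.
In particular the number of interval-posets of size `n` equals the number of Tamari
intervals of size `n`. -/
theorem intervalPoset_bijection (n : ℕ) :
    Function.Injective
      (fun p : {p : BinTree × BinTree // p.1.size = n ∧ p.2.size = n ∧ TamariLE p.1 p.2} =>
        IPrel p.1.1 p.1.2) ∧
    Set.range
      (fun p : {p : BinTree × BinTree // p.1.size = n ∧ p.2.size = n ∧ TamariLE p.1 p.2} =>
        IPrel p.1.1 p.1.2) = {rel : ℕ → ℕ → Prop | IsIntervalPoset n rel} ∧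
    Nat.card {p : BinTree × BinTree // p.1.size = n ∧ p.2.size = n ∧ TamariLE p.1 p.2} =
      Nat.card {rel : ℕ → ℕ → Prop // IsIntervalPoset n rel} := by
  set f : {p : BinTree × BinTree // p.1.size = n ∧ p.2.size = n ∧ TamariLE p.1 p.2} →
      (ℕ → ℕ → Prop) :=
    (fun p : {p : BinTree × BinTree // p.1.size = n ∧ p.2.size = n ∧ TamariLE p.1 p.2} =>
        IPrel p.1.1 p.1.2) with hfdef
  have hinj : Function.Injective f := by
    rintro ⟨⟨T1, T1'⟩, hs1, hs1', ht1⟩ ⟨⟨T2, T2'⟩, hs2, hs2', ht2⟩ h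
    obtain ⟨e1, e2⟩ := IP_inj n T1 T1' T2 T2' hs1 hs1' hs2 hs2' h
    subst e1
    subst e2
    rfl
  have hrange : Set.range f = {rel : ℕ → ℕ → Prop | IsIntervalPoset n rel} := by
    ext P
    constructor
    · rintro ⟨⟨⟨T, T'⟩, hs, hs', ht⟩, rfl⟩
      exact IP_is_intervalPoset n T T' hs hs' ht
    · intro hPmem
      obtain ⟨T, T', hs, hs', ht, hIP⟩ := intervalPoset_realize n P hPmem
      exact ⟨⟨(T, T'), hs, hs', ht⟩, hIP⟩
  refine ⟨hinj, hrange, ?_⟩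
  exact Nat.card_congr ((Equiv.ofInjective f hinj).trans (Equiv.setCongr hrange))
end

section
/- Let [T1,T1'] and [T2,T2'] be two Tamari intervals of size n with interval-posets I1 = IP[T1,T1'] and I2 = IP[T2,T2']. There exists a binary tree S with T1 ≤ S ≤ T1' and T2 ≤ S ≤ T2' if and only if the transitive closure R of the union of the relations of I1 and I2 is antisymmetric (hence a poset); and in that case R is an interval-poset, equal to IP[U,U'] for binary trees U ≤ U' such that {S : U ≤ S ≤ U'} = {S : T1 ≤ S ≤ T1' and T2 ≤ S ≤ T2'}. -/
open Polynomial

open BinTree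

/-!
`S` lies in the Tamari interval `[T, T']` iff every relation of `IP[T, T']` is a relation of
the binary-search-tree poset of `S`: comparing bracket vectors (`subtreeMax`), `T ≤ S` iff
`dec(T) ⊆ dec(S)`, and by mirror symmetry `S ≤ T'` iff `inc(T') ⊆ inc(S)`. So `S` lies in both
intervals iff its poset contains `R`, which forces `R` to be antisymmetric. Conversely, the
union of the two interval-posets satisfies every interval-poset axiom but transitivity, and these
axioms pass to `R` once it is antisymmetric. Every interval-poset `R` is contained in the poset
of a tree `U` with `dec(U) = dec(R)`, built recursively from a suitable root; mirroring gives
`U'` with `inc(U') = inc(R)`, and `U` itself shows `U ≤ U'`.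
-/

namespace BinTree

open Function

theorem Rot.size_eq {T T' : BinTree} (h : Rot T T') : T'.size = T.size := by
  induction h with
  | root A B C => simp only [size]; omega
  | left R _ ih => simp only [size, ih]
  | right L _ ih => simp only [size, ih]

theorem TamariLE.size_eq {T T' : BinTree} (h : TamariLE T T') : T'.size = T.size := by
  induction h with
  | refl => rfl
  | tail _ h ih => rw [h.size_eq, ih]

theorem inSub_bounds {T : BinTree} {a b : ℕ} (h : inSub T a b) :
    1 ≤ a ∧ a ≤ T.size ∧ 1 ≤ b ∧ b ≤ T.size := by
  induction T generalizing a b with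
  | leaf => exact h.elim
  | node l r ihl ihr =>
    simp only [inSub, size] at h ⊢
    rcases h with h | h | ⟨-, -, h⟩
    · omega
    · have := ihl h; omega
    · have := ihr h; omega

theorem inSub_trans {T : BinTree} {a b c : ℕ} (hab : inSub T a b) (hbc : inSub T b c) :
    inSub T a c := by
  induction T generalizing a b c with
  | leaf => exact hab.elim
  | node l r ihl ihr =>
    have := inSub_bounds hab
    simp only [inSub, size] at *
    rcases hbc with ⟨hc, -⟩ | hbc | ⟨hb, hc, hbc⟩
    · exact Or.inl ⟨hc, by omega, by omega⟩
    · have := inSub_bounds hbc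
      rcases hab with h | hab | h
      · omega
      · exact Or.inr (Or.inl (ihl hab hbc))
      · omega
    · have := inSub_bounds hbc
      rcases hab with h | hab | ⟨ha, -, hab⟩
      · omega
      · have := inSub_bounds hab; omega
      · exact Or.inr (Or.inr ⟨ha, hc, ihr hab hbc⟩)

theorem inSub_antisymm {T : BinTree} {a b : ℕ} (hab : inSub T a b) (hba : inSub T b a) :
    a = b := by
  induction T generalizing a b with
  | leaf => exact hab.elim
  | node l r ihl ihr =>
    simp only [inSub] at hab hba
    rcases hab with h | hab | ⟨ha, hb, hab⟩ <;> rcases hba with h' | hba | ⟨hb', ha', hba⟩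
    all_goals first
      | omega
      | exact ihl hab hba
      | (have := inSub_bounds hab; omega)
      | (have := inSub_bounds hba; omega)
      | (have := ihr hab hba; omega)

theorem inSub_convex_left {T : BinTree} {a b c : ℕ} (h : inSub T a c)
    (hab : a ≤ b) (hbc : b ≤ c) : inSub T b c := by
  induction T generalizing a b c with
  | leaf => exact h.elim
  | node l r ihl ihr =>
    simp only [inSub] at *
    rcases h with h | h | ⟨ha, hc, h⟩
    · omega
    · have := inSub_bounds h
      exact Or.inr (Or.inl (ihl h hab (by omega)))
    · exact Or.inr (Or.inr ⟨by omega, hc, ihr h (by omega) (by omega)⟩)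

theorem inSub_convex_right {T : BinTree} {a b c : ℕ} (h : inSub T c a)
    (hab : a ≤ b) (hbc : b ≤ c) : inSub T b a := by
  induction T generalizing a b c with
  | leaf => exact h.elim
  | node l r ihl ihr =>
    simp only [inSub] at *
    rcases h with h | h | ⟨hc, ha, h⟩
    · omega
    · have := inSub_bounds h
      exact Or.inr (Or.inl (ihl h hab (by omega)))
    · exact Or.inr (Or.inr ⟨by omega, ha, ihr h (by omega) (by omega)⟩)

theorem bstRel_trans {T : BinTree} {a b c : ℕ} (hab : bstRel T a b) (hbc : bstRel T b c) :
    bstRel T a c :=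
  ⟨fun h => hbc.1 (inSub_antisymm hbc.2 (h ▸ hab.2)), inSub_trans hab.2 hbc.2⟩

instance (T : BinTree) : IsTrans ℕ (bstRel T) := ⟨fun _ _ _ => bstRel_trans⟩

theorem bstRel_antisymm {T : BinTree} {a b : ℕ} (hab : bstRel T a b) (hba : bstRel T b a) :
    a = b :=
  inSub_antisymm hab.2 hba.2

def reflect : BinTree → BinTree
  | leaf => leaf
  | node l r => node (reflect r) (reflect l)

@[simp] theorem size_reflect (T : BinTree) : T.reflect.size = T.size := by
  induction T with
  | leaf => rfl
  | node l r ihl ihr => simp only [reflect, size, ihl, ihr]; omega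

@[simp] theorem reflect_reflect (T : BinTree) : T.reflect.reflect = T := by
  induction T with
  | leaf => rfl
  | node l r ihl ihr => simp only [reflect, ihl, ihr]

theorem Rot.reflect {T T' : BinTree} (h : Rot T T') : Rot T'.reflect T.reflect := by
  induction h with
  | root A B C => exact .root C.reflect B.reflect A.reflect
  | left R _ ih => exact .right _ ih
  | right L _ ih => exact .left _ ih

theorem TamariLE.reflect {T T' : BinTree} (h : TamariLE T T') :
    TamariLE T'.reflect T.reflect := by
  induction h with
  | refl => exact .refl
  | tail _ h ih => exact .head h.reflect ih

theorem tamariLE_reflect_iff {T T' : BinTree} :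
    TamariLE T'.reflect T.reflect ↔ TamariLE T T' :=
  ⟨fun h => by simpa only [reflect_reflect] using h.reflect, TamariLE.reflect⟩

theorem inSub_reflect {T : BinTree} {a b : ℕ} (h : inSub T a b) :
    inSub T.reflect (T.size + 1 - a) (T.size + 1 - b) := by
  induction T generalizing a b with
  | leaf => exact h.elim
  | node l r ihl ihr =>
    simp only [inSub, size, reflect, size_reflect] at *
    rcases h with h | h | ⟨ha, hb, h⟩
    · omega
    · have := inSub_bounds h
      refine Or.inr (Or.inr ⟨by omega, by omega, ?_⟩)
      rw [show l.size + r.size + 1 + 1 - a - (r.size + 1) = l.size + 1 - a by omega,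
        show l.size + r.size + 1 + 1 - b - (r.size + 1) = l.size + 1 - b by omega]
      exact ihl h
    · have := inSub_bounds h
      refine Or.inr (Or.inl ?_)
      rw [show l.size + r.size + 1 + 1 - a = r.size + 1 - (a - (l.size + 1)) by omega,
        show l.size + r.size + 1 + 1 - b = r.size + 1 - (b - (l.size + 1)) by omega]
      exact ihr h

theorem inSub_reflect_iff {T : BinTree} {a b : ℕ} :
    inSub T.reflect a b ↔ inSub T (T.size + 1 - a) (T.size + 1 - b) := by
  constructor
  · intro h
    have := inSub_bounds h
    simpa only [reflect_reflect, size_reflect] using inSub_reflect h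
  · intro h
    have := inSub_bounds h
    convert inSub_reflect h using 1 <;> omega

theorem decRel_reflect_iff {T : BinTree} {a b : ℕ} :
    decRel T.reflect a b ↔ incRel T (T.size + 1 - a) (T.size + 1 - b) := by
  simp only [decRel, incRel, bstRel, inSub_reflect_iff]
  constructor <;> rintro ⟨hlt, -, h⟩ <;> have := inSub_bounds h <;> exact ⟨by omega, by omega, h⟩

theorem incRel_reflect_iff {T : BinTree} {a b : ℕ} :
    incRel T.reflect a b ↔ decRel T (T.size + 1 - a) (T.size + 1 - b) := by
  simp only [decRel, incRel, bstRel, inSub_reflect_iff]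
  constructor <;> rintro ⟨hlt, -, h⟩ <;> have := inSub_bounds h <;> exact ⟨by omega, by omega, h⟩

/-- The bracket vector of `T`: `subtreeMax T b` is the largest label in the subtree rooted
at `b`. -/
def subtreeMax : BinTree → ℕ → ℕ
  | leaf, _ => 0
  | node l r, b =>
    if b ≤ l.size then subtreeMax l b
    else if b = l.size + 1 then l.size + r.size + 1
    else subtreeMax r (b - (l.size + 1)) + (l.size + 1)

theorem subtreeMax_node_left {l r : BinTree} {b : ℕ} (h : b ≤ l.size) :
    subtreeMax (node l r) b = subtreeMax l b := by
  rw [subtreeMax, if_pos h]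

theorem subtreeMax_node_root (l r : BinTree) :
    subtreeMax (node l r) (l.size + 1) = l.size + r.size + 1 := by
  rw [subtreeMax, if_neg (by omega), if_pos rfl]

theorem subtreeMax_node_right {l r : BinTree} {b : ℕ} (h : l.size + 1 < b) :
    subtreeMax (node l r) b = subtreeMax r (b - (l.size + 1)) + (l.size + 1) := by
  rw [subtreeMax, if_neg (by omega), if_neg (by omega)]

theorem subtreeMax_le_size (T : BinTree) (b : ℕ) : subtreeMax T b ≤ T.size := by
  induction T generalizing b with
  | leaf => exact le_rfl
  | node l r ihl ihr =>
    have := ihl b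
    have := ihr (b - (l.size + 1))
    simp only [subtreeMax, size]
    split_ifs <;> omega

theorem inSub_iff_le_subtreeMax {T : BinTree} {a b : ℕ} (hb : 1 ≤ b) (hbT : b ≤ T.size)
    (hba : b ≤ a) : inSub T a b ↔ a ≤ subtreeMax T b := by
  induction T generalizing a b with
  | leaf => simp only [size] at hbT; omega
  | node l r ihl ihr =>
    simp only [size] at hbT
    rcases lt_trichotomy b (l.size + 1) with hbl | rfl | hbr
    · have := subtreeMax_le_size l b
      rw [subtreeMax_node_left (by omega), inSub, ← ihl hb (by omega) hba]
      have := @inSub_bounds l a b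
      constructor
      · rintro (h | h | h) <;> omega
      · exact fun h => Or.inr (Or.inl h)
    · rw [subtreeMax_node_root, inSub]
      constructor
      · rintro (h | h | h)
        · omega
        · have := inSub_bounds h; omega
        · omega
      · exact fun h => Or.inl ⟨rfl, by omega, h⟩
    · rw [subtreeMax_node_right hbr, inSub,
        ← Nat.sub_le_iff_le_add, ← ihr (by omega) (by omega) (by omega)]
      constructor
      · rintro (h | h | h)
        · omega
        · have := inSub_bounds h; omega
        · exact h.2.2
      · exact fun h => Or.inr (Or.inr ⟨by omega, hbr, h⟩)

theorem le_subtreeMax {T : BinTree} {b : ℕ} (hb : 1 ≤ b) (hbT : b ≤ T.size) :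
    b ≤ subtreeMax T b := by
  induction T generalizing b with
  | leaf => simp only [size] at hbT; omega
  | node l r ihl ihr =>
    simp only [size] at hbT
    simp only [subtreeMax]
    split_ifs with h1 h2
    · exact ihl hb h1
    · omega
    · have := ihr (b := b - (l.size + 1)) (by omega) (by omega); omega

theorem inSub_subtreeMax {T : BinTree} {b : ℕ} (hb : 1 ≤ b) (hbT : b ≤ T.size) :
    inSub T (subtreeMax T b) b :=
  (inSub_iff_le_subtreeMax hb hbT (le_subtreeMax hb hbT)).2 le_rfl

theorem subtreeMax_le_subtreeMax {T : BinTree} {i j : ℕ} (hi : 1 ≤ i) (hij : i ≤ j)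
    (hj : j ≤ subtreeMax T i) : subtreeMax T j ≤ subtreeMax T i := by
  have hjT : j ≤ T.size := hj.trans (subtreeMax_le_size T i)
  have hiT : i ≤ T.size := hij.trans hjT
  have hji : inSub T j i := (inSub_iff_le_subtreeMax hi hiT hij).2 hj
  have := le_subtreeMax (by omega) hjT
  exact (inSub_iff_le_subtreeMax hi hiT (by omega)).1
    (inSub_trans (inSub_subtreeMax (by omega) hjT) hji)

theorem decRel_iff {T : BinTree} {a b : ℕ} :
    decRel T a b ↔ 1 ≤ b ∧ b ≤ T.size ∧ b < a ∧ a ≤ subtreeMax T b := by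
  constructor
  · rintro ⟨hba, -, h⟩
    have := inSub_bounds h
    exact ⟨this.2.2.1, this.2.2.2, hba,
      (inSub_iff_le_subtreeMax this.2.2.1 this.2.2.2 hba.le).1 h⟩
  · rintro ⟨hb, hbT, hba, h⟩
    exact ⟨hba, hba.ne', (inSub_iff_le_subtreeMax hb hbT hba.le).2 h⟩

theorem subtreeMax_rot_root (A B C : BinTree) :
    subtreeMax (node A (node B C)) =
      update (subtreeMax (node (node A B) C)) (A.size + 1) (A.size + B.size + C.size + 2) := by
  funext b
  simp only [subtreeMax, update_apply]
  repeat' split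
  all_goals try simp only [size, Nat.sub_sub] at *
  all_goals try omega
  rw [show A.size + 1 + (B.size + 1) = A.size + B.size + 1 + 1 by omega]
  omega

theorem subtreeMax_node_update_left {l l' : BinTree} (r : BinTree) {i v : ℕ}
    (hs : l'.size = l.size) (hi : i ≤ l.size) (h : subtreeMax l' = update (subtreeMax l) i v) :
    subtreeMax (node l' r) = update (subtreeMax (node l r)) i v := by
  funext b
  simp only [subtreeMax, hs, h, update_apply]
  repeat' split
  all_goals omega

theorem subtreeMax_node_update_right (l : BinTree) {r r' : BinTree} {i v : ℕ}
    (hs : r'.size = r.size) (hi : 1 ≤ i) (h : subtreeMax r' = update (subtreeMax r) i v) :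
    subtreeMax (node l r') =
      update (subtreeMax (node l r)) (i + (l.size + 1)) (v + (l.size + 1)) := by
  funext b
  simp only [subtreeMax, hs, h, update_apply]
  repeat' split
  all_goals omega

theorem Rot.subtreeMax_le {T T' : BinTree} (h : Rot T T') (b : ℕ) :
    subtreeMax T b ≤ subtreeMax T' b := by
  induction h generalizing b with
  | root A B C =>
    have := subtreeMax_le_size (node (node A B) C) b
    simp only [size] at this
    rw [subtreeMax_rot_root, update_apply]
    split <;> omega
  | left R h ih =>
    have := ih b
    simp only [subtreeMax, h.size_eq]
    split_ifs <;> omega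
  | right L h ih =>
    have := ih (b - (L.size + 1))
    simp only [subtreeMax, h.size_eq]
    split_ifs <;> omega

theorem TamariLE.subtreeMax_le {T T' : BinTree} (h : TamariLE T T') (b : ℕ) :
    subtreeMax T b ≤ subtreeMax T' b := by
  induction h with
  | refl => exact le_rfl
  | tail _ h ih => exact ih.trans (h.subtreeMax_le b)

theorem eq_of_subtreeMax_eq : ∀ {A B : BinTree}, A.size = B.size →
    (∀ b, 1 ≤ b → b ≤ A.size → subtreeMax A b = subtreeMax B b) → A = B
  | leaf, leaf, _, _ => rfl
  | leaf, node _ _, hs, _ | node _ _, leaf, hs, _ => by simp only [size] at hs; omega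
  | node l r, node l' r', hs, h => by
    simp only [size] at hs h
    have root_ne : ∀ {l r l' r' : BinTree}, l.size + r.size = l'.size + r'.size →
        l.size < l'.size →
        subtreeMax (node l r) (l.size + 1) ≠ subtreeMax (node l' r') (l.size + 1) := by
      intro l r l' r' hs hlt
      rw [subtreeMax_node_root, subtreeMax_node_left (by omega : l.size + 1 ≤ l'.size)]
      have := subtreeMax_le_size l' (l.size + 1)
      omega
    have hl : l.size = l'.size := by
      rcases lt_trichotomy l.size l'.size with hlt | heq | hlt
      · exact (root_ne (by omega) hlt (h _ (by omega) (by omega))).elim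
      · exact heq
      · exact (root_ne (by omega) hlt (h _ (by omega) (by omega)).symm).elim
    obtain rfl : l = l' := eq_of_subtreeMax_eq hl fun b hb hbl => by
      simpa only [subtreeMax_node_left hbl, subtreeMax_node_left (hl ▸ hbl)] using
        h b hb (by omega)
    obtain rfl : r = r' := eq_of_subtreeMax_eq (by omega) fun b hb hbr => by
      have := h (b + (l.size + 1)) (by omega) (by omega)
      rwa [subtreeMax_node_right (by omega), subtreeMax_node_right (by omega),
        Nat.add_sub_cancel, Nat.add_right_cancel_iff] at this
    rfl

theorem exists_rot_root_subtreeMax {T : BinTree} {i : ℕ} (hi : 1 ≤ i) (hiT : i ≤ T.size)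
    (hmax : subtreeMax T i = T.size) (hleft : ∀ j, 1 ≤ j → j < i → subtreeMax T j ≠ T.size)
    (r : BinTree) :
    ∃ T', Rot (node T r) T' ∧
      subtreeMax T' = update (subtreeMax (node T r)) i (T.size + r.size + 1) := by
  cases T with
  | leaf => simp only [size] at hiT; omega
  | node A B =>
    simp only [size] at hiT hmax hleft
    obtain rfl : i = A.size + 1 := by
      rcases lt_trichotomy i (A.size + 1) with hlt | heq | hgt
      · have := subtreeMax_le_size A i
        rw [subtreeMax_node_left (by omega)] at hmax
        omega
      · exact heq
      · exact (hleft (A.size + 1) (by omega) hgt (subtreeMax_node_root A B)).elim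
    refine ⟨node A (node B r), .root A B r, ?_⟩
    rw [subtreeMax_rot_root]
    simp only [size]
    congr 1
    omega

/-- The hypotheses say that `i` is a left child; rotating at the edge to its parent
`subtreeMax T i + 1` raises `subtreeMax T i` to the parent's value and changes nothing else. -/
theorem exists_rot_subtreeMax_eq_update : ∀ (T : BinTree) {i : ℕ}, 1 ≤ i → i ≤ T.size →
    subtreeMax T i < T.size → (∀ j, 1 ≤ j → j < i → subtreeMax T j ≠ subtreeMax T i) →
    ∃ T', Rot T T' ∧
      subtreeMax T' = update (subtreeMax T) i (subtreeMax T (subtreeMax T i + 1))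
  | leaf, _, _, hiT, _, _ => by simp only [size] at hiT; omega
  | node l r, i, hi, hiT, hlt, hleft => by
    simp only [size] at hiT hlt
    rcases lt_trichotomy i (l.size + 1) with hil | rfl | hir
    · have hil : i ≤ l.size := by omega
      have hleft : ∀ j, 1 ≤ j → j < i → subtreeMax l j ≠ subtreeMax l i := fun j hj hji => by
        simpa only [subtreeMax_node_left (hji.le.trans hil), subtreeMax_node_left hil] using
          hleft j hj hji
      rw [subtreeMax_node_left hil]
      rcases (subtreeMax_le_size l i).lt_or_eq with hlt' | heq
      · obtain ⟨l', hrot, hl'⟩ := exists_rot_subtreeMax_eq_update l hi hil hlt' hleft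
        refine ⟨node l' r, .left r hrot, ?_⟩
        rw [subtreeMax_node_update_left r hrot.size_eq hil hl', subtreeMax_node_left hlt']
      · obtain ⟨T', hrot, hT'⟩ := exists_rot_root_subtreeMax hi hil heq (heq ▸ hleft) r
        refine ⟨T', hrot, ?_⟩
        rw [hT', heq, subtreeMax_node_root]
    · rw [subtreeMax_node_root] at hlt
      omega
    · have hk : 1 ≤ i - (l.size + 1) := by omega
      have hmax := subtreeMax_node_right (r := r) hir
      obtain ⟨r', hrot, hr'⟩ := exists_rot_subtreeMax_eq_update r hk (by omega) (by omega)
        fun j hj hji => by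
          have := hleft (j + (l.size + 1)) (by omega) (by omega)
          rw [subtreeMax_node_right (by omega), hmax, Nat.add_sub_cancel] at this
          omega
      refine ⟨node l r', .right l hrot, ?_⟩
      rw [subtreeMax_node_update_right l hrot.size_eq hk hr', Nat.sub_add_cancel hir.le, hmax,
        subtreeMax_node_right (by omega), Nat.add_right_comm, Nat.add_sub_cancel]

/-- The rotation at the least label where `subtreeMax A` falls short of `subtreeMax B`. -/
theorem exists_rot_subtreeMax_le {A B : BinTree} (hs : A.size = B.size)
    (hle : ∀ b, 1 ≤ b → b ≤ B.size → subtreeMax A b ≤ subtreeMax B b)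
    (hne : ¬ ∀ b, 1 ≤ b → b ≤ A.size → subtreeMax A b = subtreeMax B b) :
    ∃ A', Rot A A' ∧ (∀ b, 1 ≤ b → b ≤ B.size → subtreeMax A' b ≤ subtreeMax B b) ∧
      ∑ b ∈ Finset.Icc 1 B.size, (subtreeMax B b - subtreeMax A' b) <
        ∑ b ∈ Finset.Icc 1 B.size, (subtreeMax B b - subtreeMax A b) := by
  classical
  have hex : ∃ i, 1 ≤ i ∧ i ≤ B.size ∧ subtreeMax A i < subtreeMax B i := by
    push Not at hne
    obtain ⟨b, hb, hbA, hb'⟩ := hne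
    exact ⟨b, hb, hs ▸ hbA, (hle b hb (hs ▸ hbA)).lt_of_ne hb'⟩
  obtain ⟨hi, hiB, hlt⟩ := Nat.find_spec hex
  set i := Nat.find hex
  have hmin : ∀ j, 1 ≤ j → j < i → subtreeMax A j = subtreeMax B j := fun j hj hji =>
    (hle j hj (by omega)).antisymm (not_lt.1 fun h => Nat.find_min hex hji ⟨hj, by omega, h⟩)
  have hiA := le_subtreeMax hi (hs ▸ hiB : i ≤ A.size)
  have hBi := subtreeMax_le_size B i
  -- if `subtreeMax A j = subtreeMax A i` with `j < i`, then `i` lies below `j` in `B` too,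
  -- so `subtreeMax B i ≤ subtreeMax B j = subtreeMax A i`
  obtain ⟨A', hrot, hA'⟩ := exists_rot_subtreeMax_eq_update A hi (by omega) (by omega)
    fun j hj hji heq => by
      have := subtreeMax_le_subtreeMax hj hji.le (by rw [← hmin j hj hji, heq]; exact hiA)
      rw [← hmin j hj hji, heq] at this
      omega
  have hparent := le_subtreeMax (T := A) (b := subtreeMax A i + 1) (by omega) (by omega)
  have hle' : ∀ b, 1 ≤ b → b ≤ B.size → subtreeMax A' b ≤ subtreeMax B b := fun b hb hbB => by
    rw [hA', update_apply]
    split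
    · subst b
      exact (hle _ (by omega) (by omega)).trans (subtreeMax_le_subtreeMax hi (by omega) hlt)
    · exact hle b hb hbB
  refine ⟨A', hrot, hle', Finset.sum_lt_sum (fun b _ => ?_) ⟨i, Finset.mem_Icc.2 ⟨hi, hiB⟩, ?_⟩⟩
  · have := hrot.subtreeMax_le b
    omega
  · have := hle' i hi hiB
    rw [hA', update_self] at this ⊢
    omega

theorem tamariLE_of_subtreeMax_le {A B : BinTree} (hs : A.size = B.size)
    (hle : ∀ b, 1 ≤ b → b ≤ B.size → subtreeMax A b ≤ subtreeMax B b) : TamariLE A B := by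
  by_cases heq : ∀ b, 1 ≤ b → b ≤ A.size → subtreeMax A b = subtreeMax B b
  · rw [eq_of_subtreeMax_eq hs heq]
    exact .refl
  obtain ⟨A', hrot, hle', hlt⟩ := exists_rot_subtreeMax_le hs hle heq
  exact .head hrot (tamariLE_of_subtreeMax_le (hrot.size_eq.trans hs) hle')
termination_by ∑ b ∈ Finset.Icc 1 B.size, (subtreeMax B b - subtreeMax A b)
decreasing_by exact hlt

theorem tamariLE_iff_decRel {T S : BinTree} (hs : T.size = S.size) :
    TamariLE T S ↔ ∀ a b, decRel T a b → decRel S a b := by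
  constructor
  · intro h a b hab
    rw [decRel_iff] at hab ⊢
    exact ⟨hab.1, hs ▸ hab.2.1, hab.2.2.1, hab.2.2.2.trans (h.subtreeMax_le b)⟩
  · intro h
    refine tamariLE_of_subtreeMax_le hs fun b hb hbS => ?_
    have hbT : b ≤ T.size := hs ▸ hbS
    rcases (le_subtreeMax hb hbT).lt_or_eq with hlt | heq
    · exact (decRel_iff.1 (h _ _ (decRel_iff.2 ⟨hb, hbT, hlt, le_rfl⟩))).2.2.2
    · exact heq ▸ le_subtreeMax hb hbS

theorem tamariLE_iff_incRel {S T : BinTree} (hs : S.size = T.size) :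
    TamariLE S T ↔ ∀ a b, incRel T a b → incRel S a b := by
  rw [← tamariLE_reflect_iff, tamariLE_iff_decRel (by simp only [size_reflect, hs])]
  simp only [decRel_reflect_iff, hs]
  refine ⟨fun h a b hab => ?_, fun h a b => h _ _⟩
  have := inSub_bounds hab.2.2
  have hrefl : ∀ x, 1 ≤ x → x ≤ T.size → T.size + 1 - (T.size + 1 - x) = x := by omega
  simpa only [hrefl a (by omega) (by omega), hrefl b (by omega) (by omega)] using
    h (T.size + 1 - a) (T.size + 1 - b)
      (by rwa [hrefl a (by omega) (by omega), hrefl b (by omega) (by omega)])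

theorem tamariLE_and_tamariLE_iff {T T' S : BinTree} {n : ℕ} (hT : T.size = n)
    (hT' : T'.size = n) :
    TamariLE T S ∧ TamariLE S T' ↔ S.size = n ∧ ∀ a b, IPrel T T' a b → bstRel S a b := by
  constructor
  · rintro ⟨hTS, hST'⟩
    have hS : S.size = n := hTS.size_eq.trans hT
    refine ⟨hS, fun a b => ?_⟩
    rintro (h | h)
    · exact ((tamariLE_iff_decRel (hT.trans hS.symm)).1 hTS a b h).2
    · exact ((tamariLE_iff_incRel (hS.trans hT'.symm)).1 hST' a b h).2
  · rintro ⟨hS, h⟩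
    exact ⟨(tamariLE_iff_decRel (hT.trans hS.symm)).2 fun a b hab => ⟨hab.1, h a b (.inl hab)⟩,
      (tamariLE_iff_incRel (hS.trans hT'.symm)).2 fun a b hab => ⟨hab.1, h a b (.inr hab)⟩⟩

theorem tamariLE_inter_iff {T1 T1' T2 T2' S : BinTree} {n : ℕ} (h1 : T1.size = n)
    (h1' : T1'.size = n) (h2 : T2.size = n) (h2' : T2'.size = n) :
    (TamariLE T1 S ∧ TamariLE S T1' ∧ TamariLE T2 S ∧ TamariLE S T2') ↔
      S.size = n ∧ ∀ a b, Relation.TransGen (fun a b => IPrel T1 T1' a b ∨ IPrel T2 T2' a b) a b →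
        bstRel S a b := by
  rw [← and_assoc, tamariLE_and_tamariLE_iff h1 h1', tamariLE_and_tamariLE_iff h2 h2']
  constructor
  · rintro ⟨⟨hS, hS1⟩, -, hS2⟩
    exact ⟨hS, Relation.transGen_minimal fun a b hab => hab.elim (hS1 a b) (hS2 a b)⟩
  · rintro ⟨hS, hR⟩
    exact ⟨⟨hS, fun a b hab => hR a b (.single (.inl hab))⟩, hS,
      fun a b hab => hR a b (.single (.inr hab))⟩

end BinTree

open Relation

/-- The axioms of an interval-poset except transitivity. -/
structure IsPreIntervalPoset (n : ℕ) (rel : ℕ → ℕ → Prop) : Prop where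
  bounds : ∀ a b, rel a b → 1 ≤ a ∧ a ≤ n ∧ 1 ≤ b ∧ b ≤ n
  irrefl : ∀ a, ¬ rel a a
  convex_inc : ∀ a b c, a < b → b < c → rel a c → rel b c
  convex_dec : ∀ a b c, a < b → b < c → rel c a → rel b a

namespace IsPreIntervalPoset

variable {n : ℕ} {rel rel' : ℕ → ℕ → Prop}

theorem sup (h : IsPreIntervalPoset n rel) (h' : IsPreIntervalPoset n rel') :
    IsPreIntervalPoset n (fun a b => rel a b ∨ rel' a b) where
  bounds a b := Or.rec (h.bounds a b) (h'.bounds a b)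
  irrefl a := not_or.2 ⟨h.irrefl a, h'.irrefl a⟩
  convex_inc a b c hab hbc := Or.imp (h.convex_inc a b c hab hbc) (h'.convex_inc a b c hab hbc)
  convex_dec a b c hab hbc := Or.imp (h.convex_dec a b c hab hbc) (h'.convex_dec a b c hab hbc)

theorem transGen_bounds (h : IsPreIntervalPoset n rel) {a b : ℕ} (hab : TransGen rel a b) :
    1 ≤ a ∧ a ≤ n ∧ 1 ≤ b ∧ b ≤ n := by
  induction hab with
  | single hab => exact h.bounds _ _ hab
  | tail _ hbc ih => have := h.bounds _ _ hbc; omega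

theorem transGen_convex_inc (h : IsPreIntervalPoset n rel) {a c : ℕ} (hac : TransGen rel a c) :
    ∀ b, a < b → b < c → TransGen rel b c := by
  induction hac using TransGen.head_induction_on with
  | single hac => exact fun b hab hbc => .single (h.convex_inc _ b _ hab hbc hac)
  | @head a x hax hxc ih =>
    intro b hab hbc
    rcases lt_trichotomy b x with hbx | rfl | hxb
    · exact .head (h.convex_inc a b x hab hbx hax) hxc
    · exact hxc
    · exact ih b hxb hbc

theorem transGen_convex_dec (h : IsPreIntervalPoset n rel) {c a : ℕ} (hca : TransGen rel c a) :
    ∀ b, a < b → b < c → TransGen rel b a := by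
  induction hca using TransGen.head_induction_on with
  | single hca => exact fun b hab hbc => .single (h.convex_dec _ b _ hab hbc hca)
  | @head c x hcx hxa ih =>
    intro b hab hbc
    rcases lt_trichotomy b x with hbx | rfl | hxb
    · exact ih b hab hbx
    · exact hxa
    · exact .head (h.convex_dec x b c hxb hbc hcx) hxa

theorem transGen (h : IsPreIntervalPoset n rel)
    (hanti : ∀ a b, TransGen rel a b → TransGen rel b a → a = b) :
    IsIntervalPoset n (TransGen rel) := by
  refine ⟨fun _ _ => h.transGen_bounds, fun a haa => ?_, fun _ _ _ => TransGen.trans,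
    fun a b c hab hbc hac => h.transGen_convex_inc hac b hab hbc,
    fun a b c hab hbc hca => h.transGen_convex_dec hca b hab hbc⟩
  cases haa with
  | single haa => exact h.irrefl a haa
  | tail hab hba =>
    obtain rfl := hanti _ _ hab (.single hba)
    exact h.irrefl _ hba

end IsPreIntervalPoset

theorem BinTree.isPreIntervalPoset_IPrel {T T' : BinTree} {n : ℕ} (hT : T.size = n)
    (hT' : T'.size = n) : IsPreIntervalPoset n (IPrel T T') where
  bounds a b := by
    rintro (⟨-, -, h⟩ | ⟨-, -, h⟩) <;> have := inSub_bounds h <;> omega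
  irrefl a := by rintro (⟨-, h, -⟩ | ⟨-, h, -⟩) <;> exact h rfl
  convex_inc a b c hab hbc := by
    rintro (⟨hca, -⟩ | ⟨-, -, h⟩)
    · omega
    · exact .inr ⟨hbc, hbc.ne, inSub_convex_left h hab.le hbc.le⟩
  convex_dec a b c hab hbc := by
    rintro (⟨-, -, h⟩ | ⟨hca, -⟩)
    · exact .inl ⟨hab, hab.ne', inSub_convex_right h hab.le hbc.le⟩
    · omega

namespace IsIntervalPoset

variable {n : ℕ} {R : ℕ → ℕ → Prop}

/-- The root of the binary tree realising `R` is the least label lying above all larger ones. -/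
theorem exists_root (h : IsIntervalPoset n R) (hn : 0 < n) :
    ∃ ρ, 1 ≤ ρ ∧ ρ ≤ n ∧ (∀ b, ¬ R ρ b) ∧ ∀ a, ρ < a → a ≤ n → R a ρ := by
  obtain ⟨hbd, hirr, htr, -, hdec⟩ := h
  classical
  have hex : ∃ k, ∀ a, k < a → a ≤ n → R a k := ⟨n, fun a h1 h2 => by omega⟩
  have hρ := Nat.find_spec hex
  have hρn : Nat.find hex ≤ n := Nat.find_min' hex fun a h1 h2 => by omega
  have hρ1 : 1 ≤ Nat.find hex := by
    by_contra h0
    have := hbd _ _ (hρ 1 (by omega) hn)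
    omega
  refine ⟨Nat.find hex, hρ1, hρn, fun b hρb => ?_, hρ⟩
  have := hbd _ _ hρb
  rcases lt_or_gt_of_ne fun e : b = Nat.find hex => hirr b (e ▸ hρb) with hbρ | hρb'
  -- `b` would lie above every larger label (by convexity below `ρ`, through `ρ` above it),
  -- contradicting the minimality of `ρ`
  · refine Nat.find_min hex hbρ fun a hba han => ?_
    rcases lt_trichotomy a (Nat.find hex) with haρ | rfl | hρa
    · exact hdec b a _ hba haρ hρb
    · exact hρb
    · exact htr _ _ _ (hρ a hρa han) hρb
  · exact hirr _ (htr _ _ _ hρb (hρ b hρb' this.2.2.2))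

theorem restrict_left (h : IsIntervalPoset n R) (k : ℕ) :
    IsIntervalPoset k (fun a b => a ≤ k ∧ b ≤ k ∧ R a b) := by
  obtain ⟨hbd, hirr, htr, hinc, hdec⟩ := h
  exact ⟨fun a b hab => by have := hbd a b hab.2.2; omega, fun a haa => hirr a haa.2.2,
    fun a b c hab hbc => ⟨hab.1, hbc.2.1, htr a b c hab.2.2 hbc.2.2⟩,
    fun a b c hab hbc hac => ⟨by omega, hac.2.1, hinc a b c hab hbc hac.2.2⟩,
    fun a b c hab hbc hca => ⟨by omega, hca.2.1, hdec a b c hab hbc hca.2.2⟩⟩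

theorem restrict_right (h : IsIntervalPoset n R) (k : ℕ) :
    IsIntervalPoset (n - k) (fun a b => 1 ≤ a ∧ 1 ≤ b ∧ R (a + k) (b + k)) := by
  obtain ⟨hbd, hirr, htr, hinc, hdec⟩ := h
  exact ⟨fun a b hab => by have := hbd _ _ hab.2.2; omega, fun a haa => hirr _ haa.2.2,
    fun a b c hab hbc => ⟨hab.1, hbc.2.1, htr _ _ _ hab.2.2 hbc.2.2⟩,
    fun a b c hab hbc hac => ⟨by omega, hac.2.1, hinc _ _ _ (by omega) (by omega) hac.2.2⟩,
    fun a b c hab hbc hca => ⟨by omega, hca.2.1, hdec _ _ _ (by omega) (by omega) hca.2.2⟩⟩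

theorem reverse (h : IsIntervalPoset n R) :
    IsIntervalPoset n (fun a b => R (n + 1 - a) (n + 1 - b)) := by
  obtain ⟨hbd, hirr, htr, hinc, hdec⟩ := h
  refine ⟨fun a b hab => by have := hbd _ _ hab; omega, fun a => hirr _,
    fun a b c => htr _ _ _, fun a b c hab hbc hac => ?_, fun a b c hab hbc hca => ?_⟩
  · have := hbd _ _ hac
    exact hdec _ _ _ (by omega) (by omega) hac
  · have := hbd _ _ hca
    exact hinc _ _ _ (by omega) (by omega) hca

theorem lt_of_rel_of_lt_of_maximal (h : IsIntervalPoset n R) {ρ a b : ℕ} (hρ : ∀ c, ¬ R ρ c)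
    (hab : R a b) (hbρ : b < ρ) : a < ρ := by
  by_contra! hρa
  rcases hρa.eq_or_lt with rfl | hρa
  · exact hρ b hab
  · exact hρ b (h.2.2.2.2 b _ a hbρ hρa hab)

theorem lt_of_rel_of_maximal_of_lt (h : IsIntervalPoset n R) {ρ a b : ℕ} (hρ : ∀ c, ¬ R ρ c)
    (hab : R a b) (hρb : ρ < b) : ρ < a := by
  by_contra! haρ
  rcases haρ.eq_or_lt with rfl | haρ
  · exact hρ b hab
  · exact hρ b (h.2.2.2.1 a _ b haρ hρb hab)

theorem exists_tree (h : IsIntervalPoset n R) :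
    ∃ U : BinTree, U.size = n ∧ (∀ a b, R a b → bstRel U a b) ∧ ∀ a b, decRel U a b → R a b := by
  induction n using Nat.strong_induction_on generalizing R with
  | _ n ih =>
  rcases Nat.eq_zero_or_pos n with rfl | hn
  · exact ⟨.leaf, rfl, fun a b hab => by have := h.1 a b hab; omega,
      fun a b hab => hab.2.2.elim⟩
  obtain ⟨ρ, hρ1, hρn, hρmax, hρroot⟩ := h.exists_root hn
  obtain ⟨L, hL, hRL, hLR⟩ := ih (ρ - 1) (by omega) (h.restrict_left (ρ - 1))
  obtain ⟨Rt, hRt, hRRt, hRtR⟩ := ih (n - ρ) (by omega) (h.restrict_right ρ)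
  refine ⟨.node L Rt, by simp only [BinTree.size]; omega, fun a b hab => ?_, fun a b hab => ?_⟩
  · have := h.1 a b hab
    refine ⟨fun e => h.2.1 a (e ▸ hab), ?_⟩
    simp only [BinTree.inSub]
    rcases lt_trichotomy b ρ with hbρ | rfl | hρb
    · have := h.lt_of_rel_of_lt_of_maximal hρmax hab hbρ
      exact .inr (.inl (hRL a b ⟨by omega, by omega, hab⟩).2)
    · exact .inl ⟨by omega, by omega, by omega⟩
    · have hρa := h.lt_of_rel_of_maximal_of_lt hρmax hab hρb
      refine .inr (.inr ⟨by omega, by omega, ?_⟩)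
      rw [show L.size + 1 = ρ by omega]
      exact (hRRt (a - ρ) (b - ρ)
        ⟨by omega, by omega, by rwa [Nat.sub_add_cancel hρa.le, Nat.sub_add_cancel hρb.le]⟩).2
  · obtain ⟨hba, hne, hin⟩ := hab
    simp only [BinTree.inSub] at hin
    rcases hin with ⟨rfl, -, ha⟩ | hin | ⟨ha, hb, hin⟩
    · rw [show L.size + 1 = ρ by omega]
      exact hρroot a (by omega) (by omega)
    · have := BinTree.inSub_bounds hin
      exact (hLR a b ⟨hba, hne, hin⟩).2.2
    · have := (hRtR _ _ ⟨by omega, by omega, hin⟩).2.2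
      rwa [show L.size + 1 = ρ by omega, Nat.sub_add_cancel (by omega),
        Nat.sub_add_cancel (by omega)] at this

theorem exists_incRel_eq (h : IsIntervalPoset n R) :
    ∃ U' : BinTree, U'.size = n ∧ ∀ a b, BinTree.incRel U' a b ↔ a < b ∧ R a b := by
  obtain ⟨V, hV, hRV, hVR⟩ := h.reverse.exists_tree
  refine ⟨V.reflect, by rw [BinTree.size_reflect, hV], fun a b => ?_⟩
  rw [BinTree.incRel_reflect_iff, hV]
  have hinv : ∀ x, 1 ≤ x → x ≤ n → n + 1 - (n + 1 - x) = x := by omega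
  constructor
  · intro hab
    have hR := hVR _ _ hab
    have := h.1 _ _ hR
    rw [hinv a (by omega) (by omega), hinv b (by omega) (by omega)] at hR
    exact ⟨by have := hab.1; omega, hR⟩
  · rintro ⟨hab, hR⟩
    have := h.1 _ _ hR
    rw [← hinv a (by omega) (by omega), ← hinv b (by omega) (by omega)] at hR
    exact ⟨by omega, hRV _ _ hR⟩

theorem exists_IPrel_eq (h : IsIntervalPoset n R) :
    ∃ U U' : BinTree, U.size = n ∧ U'.size = n ∧ TamariLE U U' ∧
      ∀ a b, R a b ↔ IPrel U U' a b := by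
  obtain ⟨U, hU, hRU, hUR⟩ := h.exists_tree
  obtain ⟨U', hU', hU'R⟩ := h.exists_incRel_eq
  have hR : ∀ a b, R a b ↔ IPrel U U' a b := fun a b => by
    constructor
    · intro hab
      rcases lt_or_gt_of_ne fun e : a = b => h.2.1 a (e ▸ hab) with hlt | hgt
      · exact .inr ((hU'R a b).2 ⟨hlt, hab⟩)
      · exact .inl ⟨hgt, hRU a b hab⟩
    · rintro (hab | hab)
      · exact hUR a b hab
      · exact ((hU'R a b).1 hab).2
  have hUU : TamariLE U U ∧ TamariLE U U' :=
    (BinTree.tamariLE_and_tamariLE_iff hU hU').2 ⟨hU, fun a b hab => hRU a b ((hR a b).2 hab)⟩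
  exact ⟨U, U', hU, hU', hUU.2, hR⟩

end IsIntervalPoset

theorem intervalPoset_intersection_general (n : ℕ) (T1 T1' T2 T2' : BinTree)
    (h1 : T1.size = n) (h1' : T1'.size = n) (h2 : T2.size = n) (h2' : T2'.size = n)
    (R : ℕ → ℕ → Prop)
    (hR : R = Relation.TransGen (fun a b => IPrel T1 T1' a b ∨ IPrel T2 T2' a b)) :
    ((∃ S : BinTree, S.size = n ∧ TamariLE T1 S ∧ TamariLE S T1' ∧
        TamariLE T2 S ∧ TamariLE S T2') ↔
      (∀ a b, R a b → R b a → a = b)) ∧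
    ((∀ a b, R a b → R b a → a = b) →
      IsIntervalPoset n R ∧
      ∃ U U' : BinTree, U.size = n ∧ U'.size = n ∧ TamariLE U U' ∧
        (∀ a b, R a b ↔ IPrel U U' a b) ∧
        (∀ S : BinTree, (TamariLE U S ∧ TamariLE S U') ↔
          (TamariLE T1 S ∧ TamariLE S T1' ∧ TamariLE T2 S ∧ TamariLE S T2'))) := by
  subst hR
  have hmem := fun S => tamariLE_inter_iff (S := S) h1 h1' h2 h2'
  have hpre := (isPreIntervalPoset_IPrel h1 h1').sup (isPreIntervalPoset_IPrel h2 h2')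
  refine ⟨⟨fun ⟨S, _, hS⟩ => ?_, fun hanti => ?_⟩, fun hanti => ⟨hpre.transGen hanti, ?_⟩⟩
  · have hRS := ((hmem S).1 hS).2
    exact fun a b hab hba => bstRel_antisymm (hRS a b hab) (hRS b a hba)
  · obtain ⟨S, hS, hRS, -⟩ := (hpre.transGen hanti).exists_tree
    exact ⟨S, hS, (hmem S).2 ⟨hS, hRS⟩⟩
  · obtain ⟨U, U', hU, hU', hUU', hRU⟩ := (hpre.transGen hanti).exists_IPrel_eq
    refine ⟨U, U', hU, hU', hUU', hRU, fun S => ?_⟩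
    rw [tamariLE_and_tamariLE_iff hU hU', hmem S]
    simp only [hRU]

/-- Let `[T1,T1']` and `[T2,T2']` be Tamari intervals of size `n` with
interval-posets `I1 = IP[T1,T1']` and `I2 = IP[T2,T2']`. There is a binary tree `S` with
`T1 ≤ S ≤ T1'` and `T2 ≤ S ≤ T2'` iff the transitive closure `R` of the union of the
relations of `I1` and `I2` is antisymmetric (hence a poset); and in that case `R` is an
interval-poset, equal to `IP[U,U']` for binary trees `U ≤ U'` whose Tamari interval is the
intersection of the two given intervals. -/
theorem intervalPoset_intersection (n : ℕ) (T1 T1' T2 T2' : BinTree)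
    (h1 : T1.size = n) (h1' : T1'.size = n) (h2 : T2.size = n) (h2' : T2'.size = n)
    (ht1 : TamariLE T1 T1') (ht2 : TamariLE T2 T2')
    (R : ℕ → ℕ → Prop)
    (hR : R = Relation.TransGen (fun a b => IPrel T1 T1' a b ∨ IPrel T2 T2' a b)) :
    ((∃ S : BinTree, S.size = n ∧ TamariLE T1 S ∧ TamariLE S T1' ∧
        TamariLE T2 S ∧ TamariLE S T2') ↔
      (∀ a b, R a b → R b a → a = b)) ∧
    ((∀ a b, R a b → R b a → a = b) →
      IsIntervalPoset n R ∧
      ∃ U U' : BinTree, U.size = n ∧ U'.size = n ∧ TamariLE U U' ∧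
        (∀ a b, R a b ↔ IPrel U U' a b) ∧
        (∀ S : BinTree, (TamariLE U S ∧ TamariLE S U') ↔
          (TamariLE T1 S ∧ TamariLE S T1' ∧ TamariLE T2 S ∧ TamariLE S T2'))) :=
  intervalPoset_intersection_general n T1 T1' T2 T2' h1 h1' h2 h2' R hR
end
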